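/- arXiv:2502.07040 — 5 statements merged into one kernel-verified Lean document; each statement's English description precedes it below -/
import Mathlib

section
/- Let F ∈ ℝ^{n×m}. Let U ∈ ℝ^{n×r} and V ∈ ℝ^{m×r} have orthonormal columns (UᵀU = I_r, VᵀV = I_r), and let Û ∈ ℝ^{n×q} and V̂ ∈ ℝ^{m×q} have orthonormal columns such that the column space of U and the column space of F V are both contained in the column space of Û, and the column space of V and the column space of Fᵀ U are both contained in the column space of V̂. Then the Galerkin projection onto the augmented bases is at least as accurate as the tangent-space projection: ‖F − Û Ûᵀ F V̂ V̂ᵀ‖_F ≤ ‖F − (U Uᵀ F + F V Vᵀ − U Uᵀ F V Vᵀ)‖_F. -/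
/-!
STATEMENT 1: The Galerkin projection onto the augmented bases is at least as
accurate as the tangent-space projection (Lemma 2 of the paper).
-/

open Matrix

attribute [local instance] Matrix.frobeniusNormedAddCommGroup

private lemma proj_fix {a b c : ℕ} (W : Matrix (Fin a) (Fin b) ℝ)
    (h : Wᵀ * W = 1) (M : Matrix (Fin b) (Fin c) ℝ) :
    (W * Wᵀ) * (W * M) = W * M := by
  rw [Matrix.mul_assoc, ← Matrix.mul_assoc Wᵀ, h, Matrix.one_mul]

private lemma sq_norm_eq_trace {n m : ℕ} (A : Matrix (Fin n) (Fin m) ℝ) :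
    ‖A‖ ^ 2 = (Aᵀ * A).trace := by
  have htr : (Aᵀ * A).trace = ∑ j, ∑ i, A i j ^ 2 := by
    simp [Matrix.trace, Matrix.diag, Matrix.mul_apply, sq]
  rw [frobenius_norm_def, htr]
  rw [← Real.rpow_natCast ((∑ i, ∑ j, ‖A i j‖ ^ 2) ^ ((1:ℝ)/2)) 2,
    ← Real.rpow_mul (by positivity)]
  norm_num
  rw [Finset.sum_comm]

private lemma key {n m : ℕ} (F T : Matrix (Fin n) (Fin m) ℝ)
    (P : Matrix (Fin n) (Fin n) ℝ) (Q : Matrix (Fin m) (Fin m) ℝ)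
    (hPP : P * P = P) (hQQ : Q * Q = Q)
    (hPs : Pᵀ = P) (hQs : Qᵀ = Q)
    (hPTQ : P * T * Q = T) :
    ‖F - P * F * Q‖ ≤ ‖F - T‖ := by
  have hPP' : ∀ {c} (X : Matrix (Fin n) (Fin c) ℝ), P * (P * X) = P * X := by
    intro c X; rw [← Matrix.mul_assoc, hPP]
  have hQQ' : ∀ {c} (X : Matrix (Fin m) (Fin c) ℝ), Q * (Q * X) = Q * X := by
    intro c X; rw [← Matrix.mul_assoc, hQQ]
  have hsplit : F - T = (F - P * F * Q) + P * (F - T) * Q := by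
    rw [Matrix.mul_sub, Matrix.sub_mul, hPTQ]; abel
  have horth : ((F - P * F * Q)ᵀ * (P * (F - T) * Q)).trace = 0 := by
    have h1 : (F - P * F * Q)ᵀ * (P * (F - T) * Q)
        = Fᵀ * (P * (F - T) * Q) - (Qᵀ * (P * F)ᵀ) * (P * (F - T) * Q) := by
      rw [transpose_sub, transpose_mul, Matrix.sub_mul]
    have h2 : Qᵀ * (P * F)ᵀ = Q * (Fᵀ * P) := by
      rw [transpose_mul, hPs, hQs]
    rw [h1, h2, trace_sub]
    have e1 : (Fᵀ * (P * (F - T) * Q)).trace = (Q * (Fᵀ * (P * (F - T)))).trace := by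
      rw [show Fᵀ * (P * (F - T) * Q) = (Fᵀ * (P * (F - T))) * Q from by
        simp only [Matrix.mul_assoc], Matrix.trace_mul_comm]
    have e2 : ((Q * (Fᵀ * P)) * (P * (F - T) * Q)).trace
        = (Q * (Fᵀ * (P * (F - T)))).trace := by
      rw [show (Q * (Fᵀ * P)) * (P * (F - T) * Q)
          = ((Q * (Fᵀ * P)) * (P * (F - T))) * Q from by
        simp only [Matrix.mul_assoc], Matrix.trace_mul_comm]
      congr 1
      calc Q * (Q * (Fᵀ * P) * (P * (F - T)))
          = Q * (Q * (Fᵀ * (P * (P * (F - T))))) := by simp only [Matrix.mul_assoc]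
        _ = Q * (Fᵀ * (P * (F - T))) := by rw [hPP', hQQ']
    rw [e1, e2, sub_self]
  have horth' : ((P * (F - T) * Q)ᵀ * (F - P * F * Q)).trace = 0 := by
    have h := horth
    rw [← Matrix.trace_transpose ((F - P * F * Q)ᵀ * (P * (F - T) * Q)),
      transpose_mul, transpose_transpose] at h
    exact h
  have hpyth : ‖F - T‖ ^ 2 = ‖F - P * F * Q‖ ^ 2 + ‖P * (F - T) * Q‖ ^ 2 := by
    rw [sq_norm_eq_trace, sq_norm_eq_trace, sq_norm_eq_trace]
    conv_lhs => rw [hsplit]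
    rw [transpose_add, Matrix.add_mul, Matrix.mul_add, Matrix.mul_add,
      trace_add, trace_add, trace_add, horth, horth']
    ring
  have hle : ‖F - P * F * Q‖ ^ 2 ≤ ‖F - T‖ ^ 2 := by
    rw [hpyth]; nlinarith [sq_nonneg ‖P * (F - T) * Q‖]
  calc ‖F - P * F * Q‖ = Real.sqrt (‖F - P * F * Q‖ ^ 2) :=
        (Real.sqrt_sq (norm_nonneg _)).symm
    _ ≤ Real.sqrt (‖F - T‖ ^ 2) := Real.sqrt_le_sqrt hle
    _ = ‖F - T‖ := Real.sqrt_sq (norm_nonneg _)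

theorem galerkin_better_than_tangent {n m r q : ℕ}
    (F : Matrix (Fin n) (Fin m) ℝ)
    (U : Matrix (Fin n) (Fin r) ℝ) (V : Matrix (Fin m) (Fin r) ℝ)
    (Uh : Matrix (Fin n) (Fin q) ℝ) (Vh : Matrix (Fin m) (Fin q) ℝ)
    (hU : Uᵀ * U = 1) (hV : Vᵀ * V = 1)
    (hUh : Uhᵀ * Uh = 1) (hVh : Vhᵀ * Vh = 1)
    (hUsub : ∃ M : Matrix (Fin q) (Fin r) ℝ, Uh * M = U)
    (hFVsub : ∃ M : Matrix (Fin q) (Fin r) ℝ, Uh * M = F * V)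
    (hVsub : ∃ M : Matrix (Fin q) (Fin r) ℝ, Vh * M = V)
    (hFTUsub : ∃ M : Matrix (Fin q) (Fin r) ℝ, Vh * M = Fᵀ * U) :
    ‖F - Uh * Uhᵀ * F * Vh * Vhᵀ‖ ≤
      ‖F - (U * Uᵀ * F + F * V * Vᵀ - U * Uᵀ * F * V * Vᵀ)‖ := by
  obtain ⟨A, hA⟩ := hUsub
  obtain ⟨B, hB⟩ := hFVsub
  obtain ⟨C, hC⟩ := hVsub
  obtain ⟨G, hG⟩ := hFTUsub
  have hPU : (Uh * Uhᵀ) * U = U := by rw [← hA]; exact proj_fix Uh hUh A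
  have hPFV : (Uh * Uhᵀ) * (F * V) = F * V := by rw [← hB]; exact proj_fix Uh hUh B
  have hQV : (Vh * Vhᵀ) * V = V := by rw [← hC]; exact proj_fix Vh hVh C
  have hQFU : (Vh * Vhᵀ) * (Fᵀ * U) = Fᵀ * U := by rw [← hG]; exact proj_fix Vh hVh G
  have hVQ : Vᵀ * (Vh * Vhᵀ) = Vᵀ := by
    have h := congrArg transpose hQV
    simp only [transpose_mul, transpose_transpose] at h
    exact h
  have hUFQ : (Uᵀ * F) * (Vh * Vhᵀ) = Uᵀ * F := by
    have h := congrArg transpose hQFU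
    simp only [transpose_mul, transpose_transpose] at h
    exact h
  have hPTQ : (Uh * Uhᵀ) * (U * Uᵀ * F + F * V * Vᵀ - U * Uᵀ * F * V * Vᵀ) * (Vh * Vhᵀ)
      = U * Uᵀ * F + F * V * Vᵀ - U * Uᵀ * F * V * Vᵀ := by
    rw [Matrix.mul_sub, Matrix.mul_add, Matrix.sub_mul, Matrix.add_mul]
    have h1 : (Uh * Uhᵀ) * (U * Uᵀ * F) * (Vh * Vhᵀ) = U * Uᵀ * F := by
      calc (Uh * Uhᵀ) * (U * Uᵀ * F) * (Vh * Vhᵀ)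
          = ((Uh * Uhᵀ) * U) * ((Uᵀ * F) * (Vh * Vhᵀ)) := by
            simp only [Matrix.mul_assoc]
        _ = U * (Uᵀ * F) := by rw [hPU, hUFQ]
        _ = U * Uᵀ * F := (Matrix.mul_assoc _ _ _).symm
    have h2 : (Uh * Uhᵀ) * (F * V * Vᵀ) * (Vh * Vhᵀ) = F * V * Vᵀ := by
      calc (Uh * Uhᵀ) * (F * V * Vᵀ) * (Vh * Vhᵀ)
          = ((Uh * Uhᵀ) * (F * V)) * (Vᵀ * (Vh * Vhᵀ)) := by
            simp only [Matrix.mul_assoc]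
        _ = (F * V) * Vᵀ := by rw [hPFV, hVQ]
    have h3 : (Uh * Uhᵀ) * (U * Uᵀ * F * V * Vᵀ) * (Vh * Vhᵀ)
        = U * Uᵀ * F * V * Vᵀ := by
      calc (Uh * Uhᵀ) * (U * Uᵀ * F * V * Vᵀ) * (Vh * Vhᵀ)
          = ((Uh * Uhᵀ) * U) * (Uᵀ * (F * (V * (Vᵀ * (Vh * Vhᵀ))))) := by
            simp only [Matrix.mul_assoc]
        _ = U * (Uᵀ * (F * (V * Vᵀ))) := by rw [hPU, hVQ]
        _ = U * Uᵀ * F * V * Vᵀ := by simp only [Matrix.mul_assoc]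
    rw [h1, h2, h3]
  have hgoal : F - Uh * Uhᵀ * F * Vh * Vhᵀ
      = F - (Uh * Uhᵀ) * F * (Vh * Vhᵀ) := by
    rw [Matrix.mul_assoc (Uh * Uhᵀ * F)]
  rw [hgoal]
  exact key F _ (Uh * Uhᵀ) (Vh * Vhᵀ) (proj_fix Uh hUh Uhᵀ) (proj_fix Vh hVh Vhᵀ)
    (by rw [transpose_mul, transpose_transpose])
    (by rw [transpose_mul, transpose_transpose]) hPTQ
end

section
/- Let Û ∈ ℝ^{n×q} and V̂ ∈ ℝ^{m×q} have orthonormal columns, let Y ∈ ℝ^{n×m} have rank at most r < q, and assume the column space of Y is contained in the column space of Û and the column space of Yᵀ is contained in the column space of V̂. Let F_1, …, F_s ∈ ℝ^{n×m} satisfy ‖F_i‖_F ≤ B, let b_1, …, b_s ∈ ℝ, h > 0, and set Ŷ = Y + h ( b_1 Û Ûᵀ F_1 V̂ V̂ᵀ + … + b_s Û Ûᵀ F_s V̂ V̂ᵀ ). Then the rank-r truncation error of Ŷ is proportional to h: ‖Ŷ − ⟦Ŷ⟧_r‖_F ≤ h · √(min{n,m,q} − r) · C_B · B, where C_B = |b_1|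 + … + |b_s|. -/
/-!
STATEMENT 4: The rank-r truncation error of
Ŷ = Y + h (b_1 Û Ûᵀ F_1 V̂ V̂ᵀ + … + b_s Û Ûᵀ F_s V̂ V̂ᵀ) is proportional to h:
‖Ŷ − ⟦Ŷ⟧_r‖_F ≤ h √(min{n,m,q} − r) C_B B, where C_B = Σ|b_i|.
-/

open Matrix

attribute [local instance] Matrix.frobeniusNormedAddCommGroup Matrix.frobeniusNormedSpace

private lemma frob_sq {a c : ℕ} (A : Matrix (Fin a) (Fin c) ℝ) :
    ‖A‖ ^ 2 = (Aᵀ * A).trace := by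
  have h1 : (∑ i, ∑ j, ‖A i j‖ ^ (2 : ℝ)) = (Aᵀ * A).trace := by
    rw [Matrix.trace, Finset.sum_comm]
    simp [Matrix.diag, Matrix.mul_apply, Matrix.transpose_apply, Real.norm_eq_abs,
      Real.rpow_two, abs_mul_abs_self, sq]
  have h2 : (0:ℝ) ≤ ∑ i, ∑ j, ‖A i j‖ ^ (2 : ℝ) := by positivity
  rw [Matrix.frobenius_norm_def, ← Real.sqrt_eq_rpow, Real.sq_sqrt h2, h1]

private lemma frob_mul_iso {a c d : ℕ} (U : Matrix (Fin a) (Fin c) ℝ)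
    (hU : Uᵀ * U = 1) (M : Matrix (Fin c) (Fin d) ℝ) : ‖U * M‖ = ‖M‖ := by
  have hsq : ‖U * M‖ ^ 2 = ‖M‖ ^ 2 := by
    rw [frob_sq, frob_sq, Matrix.transpose_mul, Matrix.mul_assoc,
      ← Matrix.mul_assoc Uᵀ, hU, Matrix.one_mul]
  calc ‖U * M‖ = Real.sqrt (‖U * M‖ ^ 2) := (Real.sqrt_sq (norm_nonneg _)).symm
    _ = Real.sqrt (‖M‖ ^ 2) := by rw [hsq]
    _ = ‖M‖ := Real.sqrt_sq (norm_nonneg _)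

private lemma frob_proj_le {a c d : ℕ} (U : Matrix (Fin a) (Fin c) ℝ)
    (hU : Uᵀ * U = 1) (F : Matrix (Fin a) (Fin d) ℝ) : ‖Uᵀ * F‖ ≤ ‖F‖ := by
  have hUX : ∀ (e : ℕ) (X : Matrix (Fin c) (Fin e) ℝ), Uᵀ * (U * X) = X := by
    intro e X; rw [← Matrix.mul_assoc, hU, Matrix.one_mul]
  set G : Matrix (Fin a) (Fin d) ℝ := F - U * (Uᵀ * F) with hG
  have key : Fᵀ * F - (Uᵀ * F)ᵀ * (Uᵀ * F) = Gᵀ * G := by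
    simp only [hG, Matrix.transpose_sub, Matrix.transpose_mul, Matrix.transpose_transpose,
      Matrix.sub_mul, Matrix.mul_sub, Matrix.mul_assoc, hUX]
    abel
  have hsq : ‖Uᵀ * F‖ ^ 2 ≤ ‖F‖ ^ 2 := by
    have h0 : (0:ℝ) ≤ ‖G‖ ^ 2 := by positivity
    have : ‖F‖ ^ 2 - ‖Uᵀ * F‖ ^ 2 = ‖G‖ ^ 2 := by
      rw [frob_sq, frob_sq, frob_sq, ← Matrix.trace_sub, key]
    linarith
  calc ‖Uᵀ * F‖ = Real.sqrt (‖Uᵀ * F‖ ^ 2) := (Real.sqrt_sq (norm_nonneg _)).symm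
    _ ≤ Real.sqrt (‖F‖ ^ 2) := Real.sqrt_le_sqrt hsq
    _ = ‖F‖ := Real.sqrt_sq (norm_nonneg _)

private lemma frob_term_le {n m q : ℕ} (Uh : Matrix (Fin n) (Fin q) ℝ)
    (Vh : Matrix (Fin m) (Fin q) ℝ) (hUh : Uhᵀ * Uh = 1) (hVh : Vhᵀ * Vh = 1)
    (F : Matrix (Fin n) (Fin m) ℝ) : ‖Uh * Uhᵀ * F * Vh * Vhᵀ‖ ≤ ‖F‖ := by
  have e1 : Uh * Uhᵀ * F * Vh * Vhᵀ = Uh * ((Uhᵀ * F * Vh) * Vhᵀ) := by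
    simp only [Matrix.mul_assoc]
  have e2 : ‖Uh * ((Uhᵀ * F * Vh) * Vhᵀ)‖ = ‖(Uhᵀ * F * Vh) * Vhᵀ‖ :=
    frob_mul_iso Uh hUh _
  have e3 : ‖(Uhᵀ * F * Vh) * Vhᵀ‖ = ‖Uhᵀ * F * Vh‖ := by
    rw [← Matrix.frobenius_norm_transpose, Matrix.transpose_mul, Matrix.transpose_transpose,
      frob_mul_iso Vh hVh, Matrix.frobenius_norm_transpose]
  have e4 : ‖Uhᵀ * F * Vh‖ ≤ ‖Uhᵀ * F‖ := by
    rw [← Matrix.frobenius_norm_transpose, Matrix.transpose_mul]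
    calc ‖Vhᵀ * (Uhᵀ * F)ᵀ‖ ≤ ‖(Uhᵀ * F)ᵀ‖ := frob_proj_le Vh hVh _
      _ = ‖Uhᵀ * F‖ := Matrix.frobenius_norm_transpose _
  have e5 : ‖Uhᵀ * F‖ ≤ ‖F‖ := frob_proj_le Uh hUh F
  rw [e1, e2, e3]
  exact e4.trans e5

theorem truncation_error_bound {n m q r s : ℕ} (hrq : r < q)
    (Uh : Matrix (Fin n) (Fin q) ℝ) (Vh : Matrix (Fin m) (Fin q) ℝ)
    (hUh : Uhᵀ * Uh = 1) (hVh : Vhᵀ * Vh = 1)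
    (Y : Matrix (Fin n) (Fin m) ℝ) (hYrank : Y.rank ≤ r)
    (hYU : ∃ M : Matrix (Fin q) (Fin m) ℝ, Uh * M = Y)
    (hYV : ∃ M : Matrix (Fin q) (Fin n) ℝ, Vh * M = Yᵀ)
    (Fm : ℕ → Matrix (Fin n) (Fin m) ℝ) (B : ℝ)
    (hB : ∀ i < s, ‖Fm i‖ ≤ B)
    (b : ℕ → ℝ) (h : ℝ) (hh : 0 < h)
    (Yhat : Matrix (Fin n) (Fin m) ℝ)
    (hYhat : Yhat =
      Y + h • ∑ i ∈ Finset.range s, b i • (Uh * Uhᵀ * Fm i * Vh * Vhᵀ)) :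
    -- for any best rank-r approximation ⟦Ŷ⟧_r of Ŷ :
    ∀ Z : Matrix (Fin n) (Fin m) ℝ, Z.rank ≤ r →
      (∀ W : Matrix (Fin n) (Fin m) ℝ, W.rank ≤ r → ‖Yhat - Z‖ ≤ ‖Yhat - W‖) →
      ‖Yhat - Z‖ ≤
        h * Real.sqrt ((min (min n m) q : ℝ) - (r : ℝ)) *
          (∑ i ∈ Finset.range s, |b i|) * B := by
  intro Z hZrank hZbest
  -- rewrite RHS sum
  have hsum_eq : (∑ i ∈ Finset.range s, |b i|) * B
      = ∑ i ∈ Finset.range s, |b i| * B := Finset.sum_mul _ _ _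
  have hterm_nonneg : ∀ i ∈ Finset.range s, (0:ℝ) ≤ |b i| * B := by
    intro i hi
    rw [Finset.mem_range] at hi
    exact mul_nonneg (abs_nonneg _) ((norm_nonneg (Fm i)).trans (hB i hi))
  have hsum_nonneg : (0:ℝ) ≤ ∑ i ∈ Finset.range s, |b i| * B :=
    Finset.sum_nonneg hterm_nonneg
  have hsqrt_nonneg : (0:ℝ) ≤ Real.sqrt ((min (min n m) q : ℝ) - (r : ℝ)) :=
    Real.sqrt_nonneg _
  by_cases hcase : min n m ≤ r
  · -- Yhat itself has rank ≤ r, so the best approximation error is 0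
    have hYhatrank : Yhat.rank ≤ r := by
      refine le_trans ?_ hcase
      exact le_trans (le_min Yhat.rank_le_height Yhat.rank_le_width) le_rfl
    have h0 : ‖Yhat - Z‖ ≤ 0 := by
      have := hZbest Yhat hYhatrank
      simpa using this
    refine h0.trans ?_
    rw [mul_assoc, hsum_eq]
    positivity
  · -- r < min n m and r < q, so the sqrt factor is ≥ 1
    push_neg at hcase
    have hge1 : (1:ℝ) ≤ Real.sqrt ((min (min n m) q : ℝ) - (r : ℝ)) := by
      have : (r:ℝ) + 1 ≤ (min (min n m) q : ℝ) := by
        have h1 : r + 1 ≤ min (min n m) q := by omega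
        exact_mod_cast h1
      rw [show (1:ℝ) = Real.sqrt 1 by simp]
      apply Real.sqrt_le_sqrt
      linarith
    have hbound : ‖Yhat - Y‖ ≤ h * ∑ i ∈ Finset.range s, |b i| * B := by
      rw [hYhat, add_sub_cancel_left, norm_smul, Real.norm_eq_abs, abs_of_pos hh]
      refine mul_le_mul_of_nonneg_left ?_ hh.le
      calc ‖∑ i ∈ Finset.range s, b i • (Uh * Uhᵀ * Fm i * Vh * Vhᵀ)‖
          ≤ ∑ i ∈ Finset.range s, ‖b i • (Uh * Uhᵀ * Fm i * Vh * Vhᵀ)‖ :=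
            norm_sum_le _ _
        _ ≤ ∑ i ∈ Finset.range s, |b i| * B := by
            refine Finset.sum_le_sum ?_
            intro i hi
            rw [Finset.mem_range] at hi
            rw [norm_smul, Real.norm_eq_abs]
            exact mul_le_mul_of_nonneg_left
              ((frob_term_le Uh Vh hUh hVh (Fm i)).trans (hB i hi)) (abs_nonneg _)
    have hZY : ‖Yhat - Z‖ ≤ ‖Yhat - Y‖ := hZbest Y hYrank
    refine (hZY.trans hbound).trans ?_
    rw [mul_assoc, hsum_eq]
    calc h * ∑ i ∈ Finset.range s, |b i| * B
        = h * (1 * ∑ i ∈ Finset.range s, |b i| * B) := by ring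
      _ ≤ h * (Real.sqrt ((min (min n m) q : ℝ) - (r : ℝ)) *
            ∑ i ∈ Finset.range s, |b i| * B) := by
          refine mul_le_mul_of_nonneg_left ?_ hh.le
          exact mul_le_mul_of_nonneg_right hge1 hsum_nonneg
      _ = h * Real.sqrt ((min (min n m) q : ℝ) - (r : ℝ)) *
            ∑ i ∈ Finset.range s, |b i| * B := by ring
end

section
/- Under Assumption 1, consider the Runge–Kutta BUG integrator stages Y_(1), …, Y_(s) starting from Y_(1) = Y_k ∈ M_r, and the classical explicit Runge–Kutta stages Z_(1), …, Z_(s) with the same coefficients and the same initial value Z_(1) = Y_k, namely Z_(i) = Y_k + h Σ_{j=1}^{i−1} a_{i,j} F(t_k + h c_j, Z_(j)). Then for each stage i ∈ {1, …, s} there exists a constant C_i > 0, independent of the rank r and of the step size h (depending only on the Lipschitz constant L, the Runge–Kutta coefficients, and an upper bound h_0 on h), such that for all 0 < h ≤ h_0: ‖Y_(i) − Z_(i)‖_F ≤ C_i h (ε_r + γ_r). -/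
/-!
STATEMENT 5 (Lemma 5 of the paper): under Assumption 1, the stages of the
Runge–Kutta BUG integrator differ from the classical explicit Runge–Kutta
stages (same coefficients, same initial value Y_k ∈ M_r) by at most
C_i h (ε_r + γ_r), with C_i > 0 independent of the rank r and the step size h.
-/

open Matrix

attribute [local instance] Matrix.frobeniusNormedAddCommGroup Matrix.frobeniusNormedSpace

/-- The tangent-space projection `P_r(Y)Z = U Uᵀ Z − U Uᵀ Z V Vᵀ + Z V Vᵀ`
for `Y = U S Vᵀ ∈ M_r` with orthonormal `U`, `V`. -/
def tangentProj {n m r : ℕ} (U : Matrix (Fin n) (Fin r) ℝ)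
    (V : Matrix (Fin m) (Fin r) ℝ) (Z : Matrix (Fin n) (Fin m) ℝ) :
    Matrix (Fin n) (Fin m) ℝ :=
  U * Uᵀ * Z - U * Uᵀ * Z * V * Vᵀ + Z * V * Vᵀ

/-- The column space of `X` is contained in the column space of `W`. -/
def spanSubset {k q l : ℕ} (W : Matrix (Fin k) (Fin q) ℝ)
    (X : Matrix (Fin k) (Fin l) ℝ) : Prop :=
  ∃ M : Matrix (Fin q) (Fin l) ℝ, W * M = X

set_option maxHeartbeats 1000000

lemma frob_norm_eq {n m : ℕ} (A : Matrix (Fin n) (Fin m) ℝ) :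
    ‖A‖ = Real.sqrt (∑ i, ∑ j, (A i j) ^ 2) := by
  rw [frobenius_norm_def, Real.sqrt_eq_rpow]
  congr 1
  refine Finset.sum_congr rfl fun i _ => Finset.sum_congr rfl fun j _ => ?_
  rw [Real.norm_eq_abs, show (2:ℝ) = ((2:ℕ):ℝ) by norm_num, Real.rpow_natCast, sq_abs]

lemma proj_left_norm_le {n m q : ℕ} (Uh : Matrix (Fin n) (Fin q) ℝ)
    (hU : Uhᵀ * Uh = 1) (X : Matrix (Fin n) (Fin m) ℝ) :
    ‖Uh * Uhᵀ * X‖ ≤ ‖X‖ := by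
  set P : Matrix (Fin n) (Fin n) ℝ := Uh * Uhᵀ with hP
  have hPP : P * P = P := by
    rw [hP, Matrix.mul_assoc, ← Matrix.mul_assoc Uhᵀ, hU, Matrix.one_mul]
  have hPt : Pᵀ = P := by rw [hP, Matrix.transpose_mul, Matrix.transpose_transpose]
  rw [frob_norm_eq, frob_norm_eq]
  apply Real.sqrt_le_sqrt
  have cross : ∑ i, ∑ j, (P * X) i j * (X - P * X) i j = 0 := by
    have h1 : (P * X)ᵀ * (X - P * X) = 0 := by
      rw [Matrix.transpose_mul, hPt, Matrix.mul_assoc, Matrix.mul_sub,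
        ← Matrix.mul_assoc P P X, hPP, sub_self, Matrix.mul_zero]
    have h2 : Matrix.trace ((P * X)ᵀ * (X - P * X)) = 0 := by rw [h1, Matrix.trace_zero]
    rw [Finset.sum_comm]
    calc ∑ j, ∑ i, (P * X) i j * (X - P * X) i j
        = Matrix.trace ((P * X)ᵀ * (X - P * X)) := by
          rw [Matrix.trace]
          refine Finset.sum_congr rfl fun j _ => ?_
          simp [Matrix.mul_apply, Matrix.diag, mul_comm]
      _ = 0 := h2
  have hsum : ∑ i, ∑ j, (X i j) ^ 2
      = (∑ i, ∑ j, ((P * X) i j) ^ 2) + ((∑ i, ∑ j, ((X - P * X) i j) ^ 2)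
        + 2 * ∑ i, ∑ j, (P * X) i j * (X - P * X) i j) := by
    simp only [Finset.mul_sum, ← Finset.sum_add_distrib]
    refine Finset.sum_congr rfl fun i _ => Finset.sum_congr rfl fun j _ => ?_
    have hx : (X - P * X) i j = X i j - (P * X) i j := rfl
    rw [hx]; ring
  have nn : 0 ≤ ∑ i, ∑ j, ((X - P * X) i j) ^ 2 := by positivity
  linarith [hsum, cross, nn]

lemma proj_right_norm_le {n m q : ℕ} (Vh : Matrix (Fin m) (Fin q) ℝ)
    (hV : Vhᵀ * Vh = 1) (X : Matrix (Fin n) (Fin m) ℝ) :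
    ‖X * Vh * Vhᵀ‖ ≤ ‖X‖ := by
  rw [← frobenius_norm_transpose X, ← frobenius_norm_transpose (X * Vh * Vhᵀ)]
  have h : (X * Vh * Vhᵀ)ᵀ = Vh * Vhᵀ * Xᵀ := by
    rw [Matrix.transpose_mul, Matrix.transpose_mul, Matrix.transpose_transpose,
      Matrix.mul_assoc]
  rw [h]
  exact proj_left_norm_le Vh hV Xᵀ

lemma span_fix {k q l : ℕ} {W : Matrix (Fin k) (Fin q) ℝ} (hW : Wᵀ * W = 1)
    {X : Matrix (Fin k) (Fin l) ℝ} (hX : spanSubset W X) : W * Wᵀ * X = X := by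
  obtain ⟨M, rfl⟩ := hX
  rw [Matrix.mul_assoc, ← Matrix.mul_assoc Wᵀ, hW, Matrix.one_mul]


lemma proj_stage_bound {n m r q : ℕ}
    (Uh : Matrix (Fin n) (Fin q) ℝ) (Vh : Matrix (Fin m) (Fin q) ℝ)
    (hUh : Uhᵀ * Uh = 1) (hVh : Vhᵀ * Vh = 1)
    (U : Matrix (Fin n) (Fin r) ℝ) (V : Matrix (Fin m) (Fin r) ℝ)
    (G : Matrix (Fin n) (Fin m) ℝ)
    (h1 : spanSubset Uh U) (h2 : spanSubset Uh (G * V))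
    (h3 : spanSubset Vh V) (h4 : spanSubset Vh (Gᵀ * U))
    (εr : ℝ) (hE : ‖G - tangentProj U V G‖ ≤ εr) :
    ‖Uh * Uhᵀ * G * Vh * Vhᵀ - G‖ ≤ 2 * εr := by
  have e1 : Uh * Uhᵀ * U = U := span_fix hUh h1
  have e2 : Uh * Uhᵀ * (G * V) = G * V := span_fix hUh h2
  have e3 : Vh * Vhᵀ * V = V := span_fix hVh h3
  have e4 : Vh * Vhᵀ * (Gᵀ * U) = Gᵀ * U := span_fix hVh h4
  -- right-side fixed point versions
  have e3r : Vᵀ * (Vh * Vhᵀ) = Vᵀ := by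
    have := congrArg Matrix.transpose e3
    rwa [Matrix.transpose_mul, Matrix.transpose_mul, Matrix.transpose_transpose] at this
  have e4r : Uᵀ * (G * (Vh * Vhᵀ)) = Uᵀ * G := by
    have := congrArg Matrix.transpose e4
    simp only [Matrix.transpose_mul, Matrix.transpose_transpose] at this
    rw [← Matrix.mul_assoc]
    exact this
  have e1' : ∀ {p : ℕ} (Z : Matrix (Fin r) (Fin p) ℝ), Uh * (Uhᵀ * (U * Z)) = U * Z := by
    intro p Z
    calc Uh * (Uhᵀ * (U * Z)) = Uh * Uhᵀ * U * Z := by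
          rw [Matrix.mul_assoc, Matrix.mul_assoc]
      _ = U * Z := by rw [e1]
  have e2' : ∀ {p : ℕ} (Z : Matrix (Fin r) (Fin p) ℝ),
      Uh * (Uhᵀ * (G * (V * Z))) = G * (V * Z) := by
    intro p Z
    calc Uh * (Uhᵀ * (G * (V * Z))) = Uh * Uhᵀ * (G * V) * Z := by
          simp only [Matrix.mul_assoc]
      _ = G * (V * Z) := by rw [e2, Matrix.mul_assoc]
  set T := tangentProj U V G with hT
  have key : Uh * Uhᵀ * T * Vh * Vhᵀ = T := by
    rw [hT]
    simp only [tangentProj, Matrix.mul_sub, Matrix.mul_add, Matrix.sub_mul, Matrix.add_mul,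
      Matrix.mul_assoc]
    rw [e3r]
    simp only [e1', e2', e4r]
  have split : Uh * Uhᵀ * G * Vh * Vhᵀ - G
      = (Uh * Uhᵀ * (G - T) * Vh * Vhᵀ) - (G - T) := by
    have : Uh * Uhᵀ * (G - T) * Vh * Vhᵀ
        = Uh * Uhᵀ * G * Vh * Vhᵀ - Uh * Uhᵀ * T * Vh * Vhᵀ := by
      simp only [Matrix.mul_sub, Matrix.sub_mul]
    rw [this, key]; abel
  rw [split]
  calc ‖Uh * Uhᵀ * (G - T) * Vh * Vhᵀ - (G - T)‖
      ≤ ‖Uh * Uhᵀ * (G - T) * Vh * Vhᵀ‖ + ‖G - T‖ := norm_sub_le _ _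
    _ ≤ ‖G - T‖ + ‖G - T‖ := by
        have ha : ‖Uh * Uhᵀ * (G - T) * Vh * Vhᵀ‖ ≤ ‖Uh * Uhᵀ * (G - T)‖ :=
          proj_right_norm_le Vh hVh _
        have hb : ‖Uh * Uhᵀ * (G - T)‖ ≤ ‖G - T‖ := proj_left_norm_le Uh hUh _
        linarith
    _ ≤ 2 * εr := by linarith

noncomputable def Cfun (a : ℕ → ℕ → ℝ) (L h0 : ℝ) : ℕ → ℝ
  | i => 1 + ∑ j ∈ (Finset.range i).attach,
      |a i j.1| * (2 + L * h0 * Cfun a L h0 j.1)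
  termination_by i => i
  decreasing_by exact Finset.mem_range.mp j.2

lemma Cfun_eq (a : ℕ → ℕ → ℝ) (L h0 : ℝ) (i : ℕ) :
    Cfun a L h0 i = 1 + ∑ j ∈ Finset.range i,
      |a i j| * (2 + L * h0 * Cfun a L h0 j) := by
  rw [Cfun]
  congr 1
  exact Finset.sum_attach (Finset.range i) fun j => |a i j| * (2 + L * h0 * Cfun a L h0 j)

lemma Cfun_pos (a : ℕ → ℕ → ℝ) {L h0 : ℝ} (hL : 0 ≤ L) (hh0 : 0 ≤ h0) (i : ℕ) :
    0 < Cfun a L h0 i := by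
  induction i using Nat.strong_induction_on with
  | _ i ih =>
    rw [Cfun_eq]
    have : 0 ≤ ∑ j ∈ Finset.range i, |a i j| * (2 + L * h0 * Cfun a L h0 j) := by
      apply Finset.sum_nonneg
      intro j hj
      have hC := ih j (Finset.mem_range.mp hj)
      apply mul_nonneg (abs_nonneg _)
      have := mul_nonneg (mul_nonneg hL hh0) hC.le
      linarith
    linarith

theorem rkbug_stage_error
    -- the explicit s-stage Runge–Kutta method and the constants of Assumption 1
    (s : ℕ) (hs : 1 ≤ s) (a : ℕ → ℕ → ℝ) (c : ℕ → ℝ) (L h0 T : ℝ)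
    (hL : 0 < L) (hh0 : 0 < h0) :
    -- there are constants C_i > 0, independent of r and h (they depend only on
    -- L, the Runge–Kutta coefficients and h0), such that
    ∃ C : ℕ → ℝ, (∀ i, 0 < C i) ∧
      ∀ (n m r : ℕ)
        (F : ℝ → Matrix (Fin n) (Fin m) ℝ → Matrix (Fin n) (Fin m) ℝ) (B : ℝ),
        -- Assumption 1
        (∀ t, 0 ≤ t → t ≤ T → ∀ X Z : Matrix (Fin n) (Fin m) ℝ,
          ‖F t X - F t Z‖ ≤ L * ‖X - Z‖) →
        (∀ t, 0 ≤ t → t ≤ T → ∀ X : Matrix (Fin n) (Fin m) ℝ, ‖F t X‖ ≤ B) →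
        ∀ εr γr : ℝ, 0 ≤ εr → 0 ≤ γr →
        -- ε_r bounds the tangent-space projection error on M_r
        (∀ t, 0 ≤ t → t ≤ T →
          ∀ (U : Matrix (Fin n) (Fin r) ℝ) (S : Matrix (Fin r) (Fin r) ℝ)
            (V : Matrix (Fin m) (Fin r) ℝ), Uᵀ * U = 1 → Vᵀ * V = 1 → IsUnit S →
            ‖F t (U * S * Vᵀ) - tangentProj U V (F t (U * S * Vᵀ))‖ ≤ εr) →
        ∀ h tk : ℝ, 0 < h → h ≤ h0 →
        -- the stage times lie in [0,T]
        (∀ i < s, 0 ≤ tk + h * c i ∧ tk + h * c i ≤ T) →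
        -- the Runge–Kutta BUG stages Y_(1),…,Y_(s)  (0-indexed: Y 0 = Y_k),
        -- their augmented one-step approximations Ŷ, and SVD-like factors
        ∀ (Y Yhat Z : ℕ → Matrix (Fin n) (Fin m) ℝ)
          (U : ℕ → Matrix (Fin n) (Fin r) ℝ) (S : ℕ → Matrix (Fin r) (Fin r) ℝ)
          (V : ℕ → Matrix (Fin m) (Fin r) ℝ),
          -- each stage lies in M_r : Y_(i) = U_(i) S_(i) V_(i)ᵀ
          (∀ i < s, (U i)ᵀ * U i = 1 ∧ (V i)ᵀ * V i = 1 ∧ IsUnit (S i) ∧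
            Y i = U i * S i * (V i)ᵀ) →
          -- the BUG step defining stage i (for 1 ≤ i < s)
          (∀ i, 1 ≤ i → i < s →
            ∃ (q : ℕ) (Uh : Matrix (Fin n) (Fin q) ℝ)
              (Vh : Matrix (Fin m) (Fin q) ℝ),
              Uhᵀ * Uh = 1 ∧ Vhᵀ * Vh = 1 ∧
              spanSubset Uh (U 0) ∧ spanSubset Vh (V 0) ∧
              (∀ j, j < i → a i j ≠ 0 →
                spanSubset Uh (U j) ∧
                spanSubset Uh (F (tk + h * c j) (Y j) * V j) ∧
                spanSubset Vh (V j) ∧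
                spanSubset Vh ((F (tk + h * c j) (Y j))ᵀ * U j)) ∧
              Yhat i = Uh * Uhᵀ *
                  (Y 0 + h • ∑ j ∈ Finset.range i,
                    a i j • F (tk + h * c j) (Y j)) * Vh * Vhᵀ ∧
              -- Y_(i) = ⟦Ŷ_(i)⟧_r is a best rank-r approximation of Ŷ_(i)
              (∀ W : Matrix (Fin n) (Fin m) ℝ, W.rank ≤ r →
                ‖Yhat i - Y i‖ ≤ ‖Yhat i - W‖) ∧
              -- and the truncation error is bounded by h γ_r
              ‖Yhat i - Y i‖ ≤ h * γr) →
          -- the classical Runge–Kutta stages with the same initial value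
          Z 0 = Y 0 →
          (∀ i, 1 ≤ i → i < s →
            Z i = Y 0 + h • ∑ j ∈ Finset.range i,
              a i j • F (tk + h * c j) (Z j)) →
          -- conclusion: local stage error bound
          ∀ i < s, ‖Y i - Z i‖ ≤ C i * h * (εr + γr) := by
  refine ⟨Cfun a L h0, fun i => Cfun_pos a hL.le hh0.le i, ?_⟩
  intro n m r F B hLip hB εr γr hεr hγr hproj h tk hh hhh0 htime Y Yhat Z U S V
    hstage hbug hZ0 hZ
  intro i
  induction i using Nat.strong_induction_on with
  | _ i ih =>
    intro his
    have hCpos : ∀ j, 0 < Cfun a L h0 j := fun j => Cfun_pos a hL.le hh0.le j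
    have hrhs0 : 0 ≤ Cfun a L h0 i * h * (εr + γr) := by
      apply mul_nonneg (mul_nonneg (hCpos i).le hh.le); linarith
    rcases Nat.eq_zero_or_pos i with hi0 | hi1
    · subst hi0
      rw [hZ0, sub_self, norm_zero]; exact hrhs0
    · obtain ⟨q, Uh, Vh, hUh, hVh, hsU0, hsV0, hspans, hYhat, _hbest, htrunc⟩ :=
        hbug i hi1 his
      obtain ⟨hU0, hV0, _hS0, hY0def⟩ := hstage 0 hs
      -- Y 0 is fixed by the double projection
      have hsY0 : spanSubset Uh (Y 0) := by
        obtain ⟨M, hM⟩ := hsU0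
        exact ⟨M * (S 0 * (V 0)ᵀ), by
          rw [← Matrix.mul_assoc, hM, ← Matrix.mul_assoc, ← hY0def]⟩
      have hsY0t : spanSubset Vh (Y 0)ᵀ := by
        obtain ⟨N, hN⟩ := hsV0
        refine ⟨N * ((S 0)ᵀ * (U 0)ᵀ), ?_⟩
        rw [← Matrix.mul_assoc, hN, hY0def, Matrix.transpose_mul, Matrix.transpose_mul,
          Matrix.transpose_transpose]
      have hY0l : Uh * Uhᵀ * Y 0 = Y 0 := span_fix hUh hsY0
      have hY0r : Y 0 * (Vh * Vhᵀ) = Y 0 := by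
        have h1 := congrArg Matrix.transpose (span_fix hVh hsY0t)
        simp only [Matrix.transpose_mul, Matrix.transpose_transpose] at h1
        rw [← Matrix.mul_assoc] at h1 ⊢
        exact h1
      have hY0fix : Uh * Uhᵀ * Y 0 * Vh * Vhᵀ = Y 0 := by
        rw [hY0l, Matrix.mul_assoc, hY0r]
      -- the intermediate point
      set Zt : Matrix (Fin n) (Fin m) ℝ :=
        Y 0 + h • ∑ j ∈ Finset.range i, a i j • F (tk + h * c j) (Y j) with hZt
      -- Step A : Yhat i - Zt as projected sum
      have expand : Yhat i = Y 0 + h • ∑ j ∈ Finset.range i,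
          a i j • (Uh * Uhᵀ * F (tk + h * c j) (Y j) * Vh * Vhᵀ) := by
        rw [hYhat]
        rw [Matrix.mul_add, Matrix.add_mul, Matrix.add_mul, hY0fix]
        congr 1
        rw [Matrix.mul_smul, Matrix.smul_mul, Matrix.smul_mul]
        congr 1
        rw [Matrix.mul_sum, Matrix.sum_mul, Matrix.sum_mul]
        refine Finset.sum_congr rfl fun j _ => ?_
        rw [Matrix.mul_smul, Matrix.smul_mul, Matrix.smul_mul]
      have hdiffA : Yhat i - Zt = h • ∑ j ∈ Finset.range i,
          a i j • (Uh * Uhᵀ * F (tk + h * c j) (Y j) * Vh * Vhᵀ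
            - F (tk + h * c j) (Y j)) := by
        rw [expand, hZt]
        rw [add_sub_add_left_eq_sub, ← smul_sub, ← Finset.sum_sub_distrib]
        congr 1
        exact Finset.sum_congr rfl fun j _ => (smul_sub _ _ _).symm
      have hA : ‖Yhat i - Zt‖ ≤ h * ∑ j ∈ Finset.range i, |a i j| * (2 * εr) := by
        rw [hdiffA, norm_smul, Real.norm_eq_abs, abs_of_pos hh]
        apply mul_le_mul_of_nonneg_left _ hh.le
        refine (norm_sum_le _ _).trans (Finset.sum_le_sum fun j hj => ?_)
        rw [norm_smul, Real.norm_eq_abs]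
        by_cases ha : a i j = 0
        · simp [ha]
        · apply mul_le_mul_of_nonneg_left _ (abs_nonneg _)
          obtain ⟨sU, sFV, sV, sFU⟩ := hspans j (Finset.mem_range.mp hj) ha
          have hjs : j < s := lt_trans (Finset.mem_range.mp hj) his
          obtain ⟨hUj, hVj, hSj, hYj⟩ := hstage j hjs
          have ht := htime j hjs
          have hEj := hproj (tk + h * c j) ht.1 ht.2 (U j) (S j) (V j) hUj hVj hSj
          rw [← hYj] at hEj
          exact proj_stage_bound Uh Vh hUh hVh (U j) (V j)
            (F (tk + h * c j) (Y j)) sU sFV sV sFU εr hEj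
      -- Step C : Zt - Z i
      have hZi := hZ i hi1 his
      have hdiffC : Zt - Z i = h • ∑ j ∈ Finset.range i,
          a i j • (F (tk + h * c j) (Y j) - F (tk + h * c j) (Z j)) := by
        rw [hZt, hZi]
        rw [add_sub_add_left_eq_sub, ← smul_sub, ← Finset.sum_sub_distrib]
        congr 1
        exact Finset.sum_congr rfl fun j _ => (smul_sub _ _ _).symm
      have hC : ‖Zt - Z i‖ ≤ h * ∑ j ∈ Finset.range i,
          |a i j| * (L * h0 * Cfun a L h0 j * (εr + γr)) := by
        rw [hdiffC, norm_smul, Real.norm_eq_abs, abs_of_pos hh]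
        apply mul_le_mul_of_nonneg_left _ hh.le
        refine (norm_sum_le _ _).trans (Finset.sum_le_sum fun j hj => ?_)
        rw [norm_smul, Real.norm_eq_abs]
        apply mul_le_mul_of_nonneg_left _ (abs_nonneg _)
        have hjs : j < s := lt_trans (Finset.mem_range.mp hj) his
        have ht := htime j hjs
        have hlip := hLip (tk + h * c j) ht.1 ht.2 (Y j) (Z j)
        have hihj := ih j (Finset.mem_range.mp hj) hjs
        have hnn : (0:ℝ) ≤ ‖Y j - Z j‖ := norm_nonneg _
        have hCj := hCpos j
        calc ‖F (tk + h * c j) (Y j) - F (tk + h * c j) (Z j)‖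
            ≤ L * ‖Y j - Z j‖ := hlip
          _ ≤ L * (Cfun a L h0 j * h * (εr + γr)) := by
              apply mul_le_mul_of_nonneg_left hihj hL.le
          _ ≤ L * h0 * Cfun a L h0 j * (εr + γr) := by
              nlinarith [mul_nonneg (mul_nonneg (mul_nonneg hL.le
                (sub_nonneg.mpr hhh0)) (hCpos j).le)
                (by linarith : (0:ℝ) ≤ εr + γr)]
      -- combine
      have htri : ‖Y i - Z i‖ ≤ ‖Yhat i - Y i‖ + (‖Yhat i - Zt‖ + ‖Zt - Z i‖) := by
        have hd : Y i - Z i = -(Yhat i - Y i) + ((Yhat i - Zt) + (Zt - Z i)) := by abel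
        rw [hd]
        refine (norm_add_le _ _).trans ?_
        rw [norm_neg]
        exact add_le_add le_rfl (norm_add_le _ _)
      have hfin : h * γr + (h * ∑ j ∈ Finset.range i, |a i j| * (2 * εr)
            + h * ∑ j ∈ Finset.range i,
              |a i j| * (L * h0 * Cfun a L h0 j * (εr + γr)))
          ≤ Cfun a L h0 i * h * (εr + γr) := by
        rw [Cfun_eq, add_mul, add_mul, one_mul, Finset.sum_mul, Finset.sum_mul]
        simp only [Finset.mul_sum]
        rw [← Finset.sum_add_distrib]
        have hterm : ∀ j ∈ Finset.range i,
            h * (|a i j| * (2 * εr)) + h * (|a i j| * (L * h0 * Cfun a L h0 j * (εr + γr)))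
            ≤ |a i j| * (2 + L * h0 * Cfun a L h0 j) * h * (εr + γr) := by
          intro j _
          have h1 : (0:ℝ) ≤ |a i j| := abs_nonneg _
          have e : |a i j| * (2 + L * h0 * Cfun a L h0 j) * h * (εr + γr)
              = 2 * (|a i j| * h * (εr + γr))
                + h * (|a i j| * (L * h0 * Cfun a L h0 j * (εr + γr))) := by ring
          rw [e]
          have l1 : h * (|a i j| * (2 * εr)) ≤ 2 * (|a i j| * h * (εr + γr)) := by
            nlinarith [mul_nonneg (mul_nonneg h1 hh.le) hγr]
          linarith
        have hsum := Finset.sum_le_sum hterm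
        have h3 : h * γr ≤ h * (εr + γr) := by nlinarith
        linarith
      calc ‖Y i - Z i‖ ≤ ‖Yhat i - Y i‖ + (‖Yhat i - Zt‖ + ‖Zt - Z i‖) := htri
        _ ≤ h * γr + (h * ∑ j ∈ Finset.range i, |a i j| * (2 * εr)
            + h * ∑ j ∈ Finset.range i,
              |a i j| * (L * h0 * Cfun a L h0 j * (εr + γr))) := by
            exact add_le_add htrunc (add_le_add hA hC)
        _ ≤ Cfun a L h0 i * h * (εr + γr) := hfin
end

section
/- Under Assumptions 1 and 2, the local error of the Runge–Kutta BUG integrator based on an explicit s-stage Runge–Kutta method of order p is bounded by: there exist constants C_loc > 0 and h_0 > 0, with C_loc independent of the rank r and of the step size h, such that for all 0 < h ≤ h_0 and all 0 ≤ t_k = k h ≤ T, the output Y_{k+1} of one step of the Runge–Kutta BUG integrator starting from Y_k ∈ M_r satisfies ‖Y_{k+1} − Φ^h_F(Y_k)‖_F ≤ C_loc h ( ε_r + γ_r + h^p ). -/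
/-!
STATEMENT 6 (Theorem 1 of the paper): under Assumptions 1 and 2, the local error
of the Runge–Kutta BUG integrator based on an explicit s-stage Runge–Kutta
method of order p satisfies ‖Y_{k+1} − Φ^h_F(Y_k)‖_F ≤ C_loc h (ε_r + γ_r + h^p),
with C_loc > 0 independent of the rank r and the step size h ≤ h_0.
-/

open Matrix

attribute [local instance] Matrix.frobeniusNormedAddCommGroup Matrix.frobeniusNormedSpace

lemma frob_sq_eq_trace {n m : ℕ} (A : Matrix (Fin n) (Fin m) ℝ) :
    ‖A‖ ^ 2 = Matrix.trace (Aᵀ * A) := by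
  rw [Matrix.frobenius_norm_def, ← Real.rpow_natCast _ 2, ← Real.rpow_mul (by positivity)]
  norm_num
  rw [Matrix.trace]
  simp only [Matrix.diag_apply, Matrix.mul_apply, Matrix.transpose_apply, Real.rpow_two,
    Real.norm_eq_abs, sq_abs]
  rw [Finset.sum_comm]
  simp [sq]

lemma proj_left_contract' {n m : ℕ} (P : Matrix (Fin n) (Fin n) ℝ)
    (hPT : Pᵀ = P) (hP2 : P * P = P) (X : Matrix (Fin n) (Fin m) ℝ) :
    ‖P * X‖ ≤ ‖X‖ := by
  have key : ‖P * X‖ ^ 2 + ‖(1 - P) * X‖ ^ 2 = ‖X‖ ^ 2 := by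
    rw [frob_sq_eq_trace, frob_sq_eq_trace, frob_sq_eq_trace]
    rw [Matrix.transpose_mul, Matrix.transpose_mul, Matrix.transpose_sub,
      Matrix.transpose_one, hPT]
    have e1 : Xᵀ * P * (P * X) = Xᵀ * (P * X) := by
      rw [Matrix.mul_assoc Xᵀ P, ← Matrix.mul_assoc P P, hP2]
    have e2 : Xᵀ * (1 - P) * ((1 - P) * X) = Xᵀ * X - Xᵀ * (P * X) := by
      have hPP : P * (P * X) = P * X := by rw [← Matrix.mul_assoc, hP2]
      simp only [Matrix.mul_sub, Matrix.sub_mul, Matrix.mul_one, Matrix.one_mul,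
        Matrix.mul_assoc, hPP]
      abel
    rw [e1, e2, Matrix.trace_sub]
    ring
  nlinarith [norm_nonneg (P * X), norm_nonneg X, sq_nonneg ‖(1 - P) * X‖]

lemma proj_left_contract {n m q : ℕ} (Uh : Matrix (Fin n) (Fin q) ℝ)
    (hUh : Uhᵀ * Uh = 1) (X : Matrix (Fin n) (Fin m) ℝ) :
    ‖Uh * Uhᵀ * X‖ ≤ ‖X‖ := by
  apply proj_left_contract'
  · simp [Matrix.transpose_mul]
  · rw [Matrix.mul_assoc, ← Matrix.mul_assoc Uhᵀ, hUh, Matrix.one_mul]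

lemma proj_right_contract {n m q : ℕ} (Vh : Matrix (Fin m) (Fin q) ℝ)
    (hVh : Vhᵀ * Vh = 1) (X : Matrix (Fin n) (Fin m) ℝ) :
    ‖X * Vh * Vhᵀ‖ ≤ ‖X‖ := by
  have : (X * Vh * Vhᵀ)ᵀ = Vh * Vhᵀ * Xᵀ := by
    simp [Matrix.transpose_mul, Matrix.mul_assoc]
  calc ‖X * Vh * Vhᵀ‖ = ‖(X * Vh * Vhᵀ)ᵀ‖ := (Matrix.frobenius_norm_transpose _).symm
    _ = ‖Vh * Vhᵀ * Xᵀ‖ := by rw [this]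
    _ ≤ ‖Xᵀ‖ := proj_left_contract Vh hVh Xᵀ
    _ = ‖X‖ := Matrix.frobenius_norm_transpose _

lemma proj_contract {n m q : ℕ} (Uh : Matrix (Fin n) (Fin q) ℝ)
    (Vh : Matrix (Fin m) (Fin q) ℝ) (hUh : Uhᵀ * Uh = 1) (hVh : Vhᵀ * Vh = 1)
    (X : Matrix (Fin n) (Fin m) ℝ) : ‖Uh * Uhᵀ * X * Vh * Vhᵀ‖ ≤ ‖X‖ :=
  le_trans (proj_right_contract Vh hVh _) (proj_left_contract Uh hUh X)

lemma fix_left {k q l : ℕ} (Uh : Matrix (Fin k) (Fin q) ℝ) (hUh : Uhᵀ * Uh = 1)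
    (X : Matrix (Fin k) (Fin l) ℝ) (hX : spanSubset Uh X) : Uh * Uhᵀ * X = X := by
  obtain ⟨M, hM⟩ := hX
  rw [← hM, Matrix.mul_assoc, ← Matrix.mul_assoc Uhᵀ, hUh, Matrix.one_mul]

lemma fix_right {k q l : ℕ} (Vh : Matrix (Fin k) (Fin q) ℝ) (hVh : Vhᵀ * Vh = 1)
    (X : Matrix (Fin l) (Fin k) ℝ) (hX : spanSubset Vh Xᵀ) : X * Vh * Vhᵀ = X := by
  have h := fix_left Vh hVh Xᵀ hX
  have := congrArg Matrix.transpose h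
  simpa [Matrix.transpose_mul, Matrix.mul_assoc] using this

lemma spanSubset_mul {k q l l' : ℕ} {W : Matrix (Fin k) (Fin q) ℝ}
    {X : Matrix (Fin k) (Fin l) ℝ} (C : Matrix (Fin l) (Fin l') ℝ)
    (hX : spanSubset W X) : spanSubset W (X * C) := by
  obtain ⟨M, hM⟩ := hX
  exact ⟨M * C, by rw [← Matrix.mul_assoc, hM]⟩

/-- The projection `X ↦ Uh Uhᵀ X Vh Vhᵀ` as a linear map. -/
def piLM {n m q : ℕ} (Uh : Matrix (Fin n) (Fin q) ℝ) (Vh : Matrix (Fin m) (Fin q) ℝ) :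
    Matrix (Fin n) (Fin m) ℝ →ₗ[ℝ] Matrix (Fin n) (Fin m) ℝ where
  toFun X := Uh * Uhᵀ * X * Vh * Vhᵀ
  map_add' X Y := by simp [Matrix.mul_add, Matrix.add_mul]
  map_smul' r X := by simp [Matrix.mul_smul, Matrix.smul_mul]

lemma piLM_apply {n m q : ℕ} (Uh : Matrix (Fin n) (Fin q) ℝ)
    (Vh : Matrix (Fin m) (Fin q) ℝ) (X : Matrix (Fin n) (Fin m) ℝ) :
    piLM Uh Vh X = Uh * Uhᵀ * X * Vh * Vhᵀ := rfl

lemma pi_fix {n m q : ℕ} {Uh : Matrix (Fin n) (Fin q) ℝ} {Vh : Matrix (Fin m) (Fin q) ℝ}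
    {X : Matrix (Fin n) (Fin m) ℝ}
    (hl : Uh * Uhᵀ * X = X) (hr : X * Vh * Vhᵀ = X) :
    piLM Uh Vh X = X := by
  rw [piLM_apply, hl, hr]

lemma pi_fix_Y {n m q r : ℕ} {Uh : Matrix (Fin n) (Fin q) ℝ} {Vh : Matrix (Fin m) (Fin q) ℝ}
    (hUh : Uhᵀ * Uh = 1) (hVh : Vhᵀ * Vh = 1)
    {U0 : Matrix (Fin n) (Fin r) ℝ} {S0 : Matrix (Fin r) (Fin r) ℝ}
    {V0 : Matrix (Fin m) (Fin r) ℝ}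
    (hU : spanSubset Uh U0) (hV : spanSubset Vh V0) :
    piLM Uh Vh (U0 * S0 * V0ᵀ) = U0 * S0 * V0ᵀ := by
  apply pi_fix
  · have := fix_left Uh hUh (U0 * (S0 * V0ᵀ)) (spanSubset_mul _ hU)
    calc Uh * Uhᵀ * (U0 * S0 * V0ᵀ) = Uh * Uhᵀ * (U0 * (S0 * V0ᵀ)) := by
          rw [Matrix.mul_assoc U0]
      _ = U0 * (S0 * V0ᵀ) := this
      _ = U0 * S0 * V0ᵀ := by rw [Matrix.mul_assoc]
  · apply fix_right Vh hVh
    have : (U0 * S0 * V0ᵀ)ᵀ = V0 * (S0ᵀ * U0ᵀ) := by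
      simp [Matrix.transpose_mul, Matrix.mul_assoc]
    rw [this]
    exact spanSubset_mul _ hV

lemma pi_err {n m q r : ℕ} {Uh : Matrix (Fin n) (Fin q) ℝ} {Vh : Matrix (Fin m) (Fin q) ℝ}
    (hUh : Uhᵀ * Uh = 1) (hVh : Vhᵀ * Vh = 1)
    {Uj : Matrix (Fin n) (Fin r) ℝ} {Vj : Matrix (Fin m) (Fin r) ℝ}
    {G : Matrix (Fin n) (Fin m) ℝ}
    (h1 : spanSubset Uh Uj) (h2 : spanSubset Uh (G * Vj))
    (h3 : spanSubset Vh Vj) (h4 : spanSubset Vh (Gᵀ * Uj))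
    {εr : ℝ} (hε : ‖G - tangentProj Uj Vj G‖ ≤ εr) :
    ‖piLM Uh Vh G - G‖ ≤ 2 * εr := by
  set P := tangentProj Uj Vj G with hPdef
  have t1 : piLM Uh Vh (Uj * Ujᵀ * G) = Uj * Ujᵀ * G := by
    apply pi_fix
    · have := fix_left Uh hUh (Uj * (Ujᵀ * G)) (spanSubset_mul _ h1)
      calc Uh * Uhᵀ * (Uj * Ujᵀ * G) = Uh * Uhᵀ * (Uj * (Ujᵀ * G)) := by
            rw [Matrix.mul_assoc Uj]
        _ = Uj * (Ujᵀ * G) := this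
        _ = Uj * Ujᵀ * G := by rw [Matrix.mul_assoc]
    · apply fix_right Vh hVh
      have : (Uj * Ujᵀ * G)ᵀ = Gᵀ * Uj * Ujᵀ := by
        simp [Matrix.transpose_mul, Matrix.mul_assoc]
      rw [this]
      exact spanSubset_mul _ h4
  have t3 : piLM Uh Vh (G * Vj * Vjᵀ) = G * Vj * Vjᵀ := by
    apply pi_fix
    · have := fix_left Uh hUh (G * Vj * Vjᵀ) (spanSubset_mul _ h2)
      exact this
    · apply fix_right Vh hVh
      have : (G * Vj * Vjᵀ)ᵀ = Vj * (Vjᵀ * Gᵀ) := by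
        simp [Matrix.transpose_mul, Matrix.mul_assoc]
      rw [this]
      exact spanSubset_mul _ h3
  have t2 : piLM Uh Vh (Uj * Ujᵀ * G * Vj * Vjᵀ) = Uj * Ujᵀ * G * Vj * Vjᵀ := by
    apply pi_fix
    · have := fix_left Uh hUh (Uj * (Ujᵀ * G * Vj * Vjᵀ))
        (spanSubset_mul _ h1)
      calc Uh * Uhᵀ * (Uj * Ujᵀ * G * Vj * Vjᵀ)
            = Uh * Uhᵀ * (Uj * (Ujᵀ * G * Vj * Vjᵀ)) := by
            simp only [Matrix.mul_assoc]
        _ = Uj * (Ujᵀ * G * Vj * Vjᵀ) := this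
        _ = Uj * Ujᵀ * G * Vj * Vjᵀ := by simp only [Matrix.mul_assoc]
    · apply fix_right Vh hVh
      have : (Uj * Ujᵀ * G * Vj * Vjᵀ)ᵀ = Vj * (Vjᵀ * Gᵀ * Uj * Ujᵀ) := by
        simp [Matrix.transpose_mul, Matrix.mul_assoc]
      rw [this]
      exact spanSubset_mul _ h3
  have hfixP : piLM Uh Vh P = P := by
    rw [hPdef, tangentProj, map_add, map_sub, t1, t2, t3]
  have : piLM Uh Vh G - G = piLM Uh Vh (G - P) + (P - G) := by
    rw [map_sub, hfixP]; abel
  rw [this]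
  calc ‖piLM Uh Vh (G - P) + (P - G)‖
      ≤ ‖piLM Uh Vh (G - P)‖ + ‖P - G‖ := norm_add_le _ _
    _ ≤ ‖G - P‖ + ‖P - G‖ := by
        exact add_le_add (proj_contract Uh Vh hUh hVh _) le_rfl
    _ ≤ εr + εr := by rw [norm_sub_rev P G]; exact add_le_add hε hε
    _ = 2 * εr := by ring

/-- Iteratively constructed stages of the classical explicit RK method. -/
noncomputable def Zaux {n m : ℕ}
    (F : ℝ → Matrix (Fin n) (Fin m) ℝ → Matrix (Fin n) (Fin m) ℝ)
    (a : ℕ → ℕ → ℝ) (c : ℕ → ℝ) (tk h : ℝ) (Y0 : Matrix (Fin n) (Fin m) ℝ) :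
    ℕ → ℕ → Matrix (Fin n) (Fin m) ℝ
  | 0 => fun _ => Y0
  | (k+1) => fun j =>
      if j ≤ k then Zaux F a c tk h Y0 k j
      else Y0 + h • ∑ j' ∈ Finset.range (k+1),
        a (k+1) j' • F (tk + h * c j') (Zaux F a c tk h Y0 k j')

lemma Zaux_stable {n m : ℕ}
    (F : ℝ → Matrix (Fin n) (Fin m) ℝ → Matrix (Fin n) (Fin m) ℝ)
    (a : ℕ → ℕ → ℝ) (c : ℕ → ℝ) (tk h : ℝ) (Y0 : Matrix (Fin n) (Fin m) ℝ) :
    ∀ k' k j, k ≤ k' → j ≤ k → Zaux F a c tk h Y0 k' j = Zaux F a c tk h Y0 k j := by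
  intro k'
  induction k' with
  | zero => intro k j hk _; interval_cases k; rfl
  | succ k' ih =>
    intro k j hk hj
    rcases Nat.lt_or_ge k (k'+1) with hlt | hge
    · have hk' : k ≤ k' := Nat.lt_succ_iff.mp hlt
      have hjk' : j ≤ k' := le_trans hj hk'
      rw [show Zaux F a c tk h Y0 (k'+1) j = Zaux F a c tk h Y0 k' j from if_pos hjk']
      exact ih k j hk' hj
    · have : k = k' + 1 := le_antisymm hk hge
      rw [this]

noncomputable def Zstage {n m : ℕ}
    (F : ℝ → Matrix (Fin n) (Fin m) ℝ → Matrix (Fin n) (Fin m) ℝ)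
    (a : ℕ → ℕ → ℝ) (c : ℕ → ℝ) (tk h : ℝ) (Y0 : Matrix (Fin n) (Fin m) ℝ)
    (j : ℕ) : Matrix (Fin n) (Fin m) ℝ :=
  Zaux F a c tk h Y0 j j

lemma Zstage_zero {n m : ℕ} (F : ℝ → Matrix (Fin n) (Fin m) ℝ → Matrix (Fin n) (Fin m) ℝ)
    (a : ℕ → ℕ → ℝ) (c : ℕ → ℝ) (tk h : ℝ) (Y0 : Matrix (Fin n) (Fin m) ℝ) :
    Zstage F a c tk h Y0 0 = Y0 := rfl

lemma Zstage_rec {n m : ℕ} (F : ℝ → Matrix (Fin n) (Fin m) ℝ → Matrix (Fin n) (Fin m) ℝ)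
    (a : ℕ → ℕ → ℝ) (c : ℕ → ℝ) (tk h : ℝ) (Y0 : Matrix (Fin n) (Fin m) ℝ) (i : ℕ)
    (hi : 1 ≤ i) :
    Zstage F a c tk h Y0 i = Y0 + h • ∑ j ∈ Finset.range i,
      a i j • F (tk + h * c j) (Zstage F a c tk h Y0 j) := by
  obtain ⟨k, rfl⟩ := Nat.exists_eq_add_of_le hi
  rw [Zstage, show (1 + k) = k + 1 from Nat.add_comm 1 k]
  rw [show Zaux F a c tk h Y0 (k+1) (k+1) = _ from if_neg (Nat.not_succ_le_self k)]
  congr 2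
  apply Finset.sum_congr rfl
  intro j hj
  have hj' : j ≤ k := Nat.lt_succ_iff.mp (Finset.mem_range.mp hj)
  rw [Zaux_stable F a c tk h Y0 k j j hj' le_rfl]
  rfl

set_option maxHeartbeats 4000000

theorem rkbug_local_error
    -- the explicit s-stage Runge–Kutta method of order p, and the constants of
    -- Assumptions 1 and 2
    (s p : ℕ) (hs : 1 ≤ s) (a : ℕ → ℕ → ℝ) (b c : ℕ → ℝ) (L h0 T CL : ℝ)
    (hL : 0 < L) (hh0 : 0 < h0) (hCL : 0 < CL) :
    -- there is a constant C_loc > 0 independent of r and h such that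
    ∃ Cloc : ℝ, 0 < Cloc ∧
      ∀ (n m r : ℕ)
        (F : ℝ → Matrix (Fin n) (Fin m) ℝ → Matrix (Fin n) (Fin m) ℝ) (B : ℝ),
        -- Assumption 1
        (∀ t, 0 ≤ t → t ≤ T → ∀ X Z : Matrix (Fin n) (Fin m) ℝ,
          ‖F t X - F t Z‖ ≤ L * ‖X - Z‖) →
        (∀ t, 0 ≤ t → t ≤ T → ∀ X : Matrix (Fin n) (Fin m) ℝ, ‖F t X‖ ≤ B) →
        -- the exact flow Φ of Ẏ = F(t,Y): `Phi t0 t X` is the solution value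
        -- at time t of the initial value problem with value X at time t0
        ∀ Phi : ℝ → ℝ → Matrix (Fin n) (Fin m) ℝ → Matrix (Fin n) (Fin m) ℝ,
        (∀ t0 X, Phi t0 t0 X = X) →
        (∀ (t0 : ℝ) (X : Matrix (Fin n) (Fin m) ℝ), ∀ t, 0 ≤ t → t ≤ T →
          HasDerivAt (fun τ => Phi t0 τ X) (F t (Phi t0 t X)) t) →
        -- Assumption 2: order-p local accuracy of the classical Runge–Kutta
        -- step, for every initial value Z0
        (∀ tk h : ℝ, 0 < h → h ≤ h0 → 0 ≤ tk → tk + h ≤ T →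
          ∀ (Z0 : Matrix (Fin n) (Fin m) ℝ)
            (Z : ℕ → Matrix (Fin n) (Fin m) ℝ), Z 0 = Z0 →
            (∀ i, 1 ≤ i → i < s → Z i = Z0 + h • ∑ j ∈ Finset.range i,
              a i j • F (tk + h * c j) (Z j)) →
            ‖Z0 + h • ∑ i ∈ Finset.range s, b i • F (tk + h * c i) (Z i) -
                Phi tk (tk + h) Z0‖ ≤ CL * h ^ (p + 1)) →
        ∀ εr γr : ℝ, 0 ≤ εr → 0 ≤ γr →
        -- ε_r bounds the tangent-space projection error on M_r
        (∀ t, 0 ≤ t → t ≤ T →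
          ∀ (U : Matrix (Fin n) (Fin r) ℝ) (S : Matrix (Fin r) (Fin r) ℝ)
            (V : Matrix (Fin m) (Fin r) ℝ), Uᵀ * U = 1 → Vᵀ * V = 1 → IsUnit S →
            ‖F t (U * S * Vᵀ) - tangentProj U V (F t (U * S * Vᵀ))‖ ≤ εr) →
        ∀ h tk : ℝ, 0 < h → h ≤ h0 → 0 ≤ tk → tk + h ≤ T →
        (∀ i < s, 0 ≤ tk + h * c i ∧ tk + h * c i ≤ T) →
        -- one step of the Runge–Kutta BUG integrator from Y_k = Y 0 ∈ M_r :
        -- internal stages Y_(1),…,Y_(s) (0-indexed), with factors U, S, V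
        ∀ (Y Yhat : ℕ → Matrix (Fin n) (Fin m) ℝ)
          (U : ℕ → Matrix (Fin n) (Fin r) ℝ) (S : ℕ → Matrix (Fin r) (Fin r) ℝ)
          (V : ℕ → Matrix (Fin m) (Fin r) ℝ),
          (∀ i < s, (U i)ᵀ * U i = 1 ∧ (V i)ᵀ * V i = 1 ∧ IsUnit (S i) ∧
            Y i = U i * S i * (V i)ᵀ) →
          (∀ i, 1 ≤ i → i < s →
            ∃ (q : ℕ) (Uh : Matrix (Fin n) (Fin q) ℝ)
              (Vh : Matrix (Fin m) (Fin q) ℝ),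
              Uhᵀ * Uh = 1 ∧ Vhᵀ * Vh = 1 ∧
              spanSubset Uh (U 0) ∧ spanSubset Vh (V 0) ∧
              (∀ j, j < i → a i j ≠ 0 →
                spanSubset Uh (U j) ∧
                spanSubset Uh (F (tk + h * c j) (Y j) * V j) ∧
                spanSubset Vh (V j) ∧
                spanSubset Vh ((F (tk + h * c j) (Y j))ᵀ * U j)) ∧
              Yhat i = Uh * Uhᵀ *
                  (Y 0 + h • ∑ j ∈ Finset.range i,
                    a i j • F (tk + h * c j) (Y j)) * Vh * Vhᵀ ∧
              (∀ W : Matrix (Fin n) (Fin m) ℝ, W.rank ≤ r →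
                ‖Yhat i - Y i‖ ≤ ‖Yhat i - W‖) ∧
              ‖Yhat i - Y i‖ ≤ h * γr) →
          -- the final (update) step producing Y_{k+1} = ⟦Ŷ_{k+1}⟧_r
          ∀ Yk1 Yhat1 : Matrix (Fin n) (Fin m) ℝ,
          (∃ (q : ℕ) (Uh : Matrix (Fin n) (Fin q) ℝ)
              (Vh : Matrix (Fin m) (Fin q) ℝ),
              Uhᵀ * Uh = 1 ∧ Vhᵀ * Vh = 1 ∧
              spanSubset Uh (U 0) ∧ spanSubset Vh (V 0) ∧
              (∀ i < s, b i ≠ 0 →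
                spanSubset Uh (U i) ∧
                spanSubset Uh (F (tk + h * c i) (Y i) * V i) ∧
                spanSubset Vh (V i) ∧
                spanSubset Vh ((F (tk + h * c i) (Y i))ᵀ * U i)) ∧
              Yhat1 = Uh * Uhᵀ *
                  (Y 0 + h • ∑ i ∈ Finset.range s,
                    b i • F (tk + h * c i) (Y i)) * Vh * Vhᵀ ∧
              (∀ W : Matrix (Fin n) (Fin m) ℝ, W.rank ≤ r →
                ‖Yhat1 - Yk1‖ ≤ ‖Yhat1 - W‖) ∧
              Yk1.rank ≤ r ∧
              ‖Yhat1 - Yk1‖ ≤ h * γr) →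
          -- conclusion: local error bound of the Runge–Kutta BUG integrator
          ‖Yk1 - Phi tk (tk + h) (Y 0)‖ ≤ Cloc * h * (εr + γr + h ^ p) := by
  
  classical
  set A : ℝ := ∑ i ∈ Finset.range s, ∑ j ∈ Finset.range s, |a i j| with hAdef
  set Bs : ℝ := ∑ i ∈ Finset.range s, |b i| with hBsdef
  have hA : 0 ≤ A := Finset.sum_nonneg fun i _ => Finset.sum_nonneg fun j _ => abs_nonneg _
  have hBs : 0 ≤ Bs := Finset.sum_nonneg fun i _ => abs_nonneg _
  set c0 : ℝ := h0 * A * L with hc0def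
  have hc0 : 0 ≤ c0 := by positivity
  set D : ℝ := 2 * A + 1 with hDdef
  have hD : 1 ≤ D := by rw [hDdef]; linarith
  have hD0 : 0 < D := by linarith
  set Cloc : ℝ := 1 + 2 * Bs + L * Bs * h0 * D * (1 + c0) ^ s + CL with hClocdef
  have hpow_pos : (0:ℝ) < (1 + c0) ^ s := by positivity
  refine ⟨Cloc, by positivity, ?_⟩
  intro n m r F B hLip hB Phi hPhi0 hPhiD hRK εr γr hεr hγr hεbound h tk hh hhh0 htk htkh
    hc Y Yhat U S V hY hstages Yk1 Yhat1 hfinal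
  set Z : ℕ → Matrix (Fin n) (Fin m) ℝ := Zstage F a c tk h (Y 0) with hZdef
  have hZ0 : Z 0 = Y 0 := rfl
  have hZrec : ∀ i, 1 ≤ i → Z i = Y 0 + h • ∑ j ∈ Finset.range i,
      a i j • F (tk + h * c j) (Z j) := fun i hi => Zstage_rec F a c tk h (Y 0) i hi
  -- tangent projection error at each stage
  have Ftang : ∀ j, j < s →
      ‖F (tk + h * c j) (Y j) - tangentProj (U j) (V j) (F (tk + h * c j) (Y j))‖ ≤ εr := by
    intro j hj
    obtain ⟨hUj, hVj, hSj, hYj⟩ := hY j hj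
    have := hεbound (tk + h * c j) (hc j hj).1 (hc j hj).2 (U j) (S j) (V j) hUj hVj hSj
    rwa [← hYj] at this
  -- row sums of |a| are below A
  have hrow : ∀ i, i < s → ∑ j ∈ Finset.range i, |a i j| ≤ A := by
    intro i his
    calc ∑ j ∈ Finset.range i, |a i j|
        ≤ ∑ j ∈ Finset.range s, |a i j| := by
          apply Finset.sum_le_sum_of_subset_of_nonneg
          · exact Finset.range_subset_range.mpr (le_of_lt his)
          · intro j _ _; exact abs_nonneg _
      _ ≤ A := by
          rw [hAdef]
          exact Finset.single_le_sum (f := fun i' => ∑ j ∈ Finset.range s, |a i' j|)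
            (fun i' _ => Finset.sum_nonneg fun j _ => abs_nonneg _)
            (Finset.mem_range.mpr his)
  -- key stage-error estimate
  have key : ∀ i, i < s → ‖Y i - Z i‖ ≤ h * D * (εr + γr) * (1 + c0) ^ i := by
    intro i
    induction i using Nat.strong_induction_on with
    | _ i ih =>
      intro his
      match i, his, ih with
      | 0, his, ih =>
        rw [hZ0, sub_self, norm_zero, pow_zero, mul_one]
        apply mul_nonneg (by positivity) (by linarith)
      | (k+1 : ℕ), his, ih =>
        obtain ⟨q, Uh, Vh, hUh, hVh, hsU0, hsV0, hspan, hYhateq, _, htrunc⟩ :=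
          hstages (k+1) (Nat.succ_le_succ (Nat.zero_le k)) his
        have h0fix : piLM Uh Vh (Y 0) = Y 0 := by
          obtain ⟨hU0, hV0, hS0, hY0⟩ := hY 0 (lt_of_lt_of_le Nat.zero_lt_one hs)
          rw [hY0]; exact pi_fix_Y hUh hVh hsU0 hsV0
        have hexp : Yhat (k+1) = Y 0 + h • ∑ j ∈ Finset.range (k+1),
            a (k+1) j • piLM Uh Vh (F (tk + h * c j) (Y j)) := by
          have h1 : Yhat (k+1) = piLM Uh Vh (Y 0 + h • ∑ j ∈ Finset.range (k+1),
              a (k+1) j • F (tk + h * c j) (Y j)) := hYhateq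
          rw [h1, map_add, _root_.map_smul, map_sum, h0fix]
          congr 2
          apply Finset.sum_congr rfl
          intro j _
          rw [_root_.map_smul]
        have hZk : Z (k+1) = Y 0 + h • ∑ j ∈ Finset.range (k+1),
            a (k+1) j • F (tk + h * c j) (Z j) :=
          hZrec (k+1) (Nat.succ_le_succ (Nat.zero_le k))
        have hdiff : Yhat (k+1) - Z (k+1) = h • ∑ j ∈ Finset.range (k+1),
            a (k+1) j • (piLM Uh Vh (F (tk + h * c j) (Y j)) - F (tk + h * c j) (Z j)) := by
          rw [hexp, hZk, add_sub_add_left_eq_sub, ← smul_sub, ← Finset.sum_sub_distrib]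
          congr 1
          apply Finset.sum_congr rfl
          intro j _
          rw [smul_sub]
        set M : ℝ := h * D * (εr + γr) * (1 + c0) ^ k with hMdef
        have hM0 : 0 ≤ M := by positivity
        have hterm : ∀ j ∈ Finset.range (k+1),
            ‖a (k+1) j • (piLM Uh Vh (F (tk + h * c j) (Y j)) - F (tk + h * c j) (Z j))‖
              ≤ |a (k+1) j| * (2 * εr + L * M) := by
          intro j hjmem
          have hjk : j < k + 1 := Finset.mem_range.mp hjmem
          have hjs : j < s := lt_trans hjk his
          have hej : ‖Y j - Z j‖ ≤ M := by
            have h1 := ih j hjk hjs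
            have h2 : (1 + c0) ^ j ≤ (1 + c0) ^ k :=
              pow_le_pow_right₀ (by linarith) (Nat.lt_succ_iff.mp hjk)
            calc ‖Y j - Z j‖ ≤ h * D * (εr + γr) * (1 + c0) ^ j := h1
              _ ≤ M := by
                rw [hMdef]
                exact mul_le_mul_of_nonneg_left h2
                  (mul_nonneg (by positivity) (by linarith))
          rw [norm_smul, Real.norm_eq_abs]
          by_cases hne : a (k+1) j = 0
          · rw [hne, abs_zero, zero_mul, zero_mul]
          · apply mul_le_mul_of_nonneg_left _ (abs_nonneg _)
            obtain ⟨hsp1, hsp2, hsp3, hsp4⟩ := hspan j hjk hne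
            have herr := pi_err hUh hVh hsp1 hsp2 hsp3 hsp4 (Ftang j hjs)
            have hlip := hLip (tk + h * c j) (hc j hjs).1 (hc j hjs).2 (Y j) (Z j)
            calc ‖piLM Uh Vh (F (tk + h * c j) (Y j)) - F (tk + h * c j) (Z j)‖
                ≤ ‖piLM Uh Vh (F (tk + h * c j) (Y j)) - F (tk + h * c j) (Y j)‖
                  + ‖F (tk + h * c j) (Y j) - F (tk + h * c j) (Z j)‖ := by
                  have := norm_sub_le_norm_sub_add_norm_sub
                    (piLM Uh Vh (F (tk + h * c j) (Y j))) (F (tk + h * c j) (Y j))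
                    (F (tk + h * c j) (Z j))
                  exact this
              _ ≤ 2 * εr + L * ‖Y j - Z j‖ := add_le_add herr hlip
              _ ≤ 2 * εr + L * M := by
                linarith only [mul_le_mul_of_nonneg_left hej hL.le]
        have hnorm2 : ‖Yhat (k+1) - Z (k+1)‖ ≤ h * (A * (2 * εr + L * M)) := by
          rw [hdiff, norm_smul, Real.norm_eq_abs, abs_of_pos hh]
          apply mul_le_mul_of_nonneg_left _ (le_of_lt hh)
          calc ‖∑ j ∈ Finset.range (k+1),
                a (k+1) j • (piLM Uh Vh (F (tk + h * c j) (Y j)) - F (tk + h * c j) (Z j))‖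
              ≤ ∑ j ∈ Finset.range (k+1),
                ‖a (k+1) j • (piLM Uh Vh (F (tk + h * c j) (Y j)) - F (tk + h * c j) (Z j))‖ :=
                norm_sum_le _ _
            _ ≤ ∑ j ∈ Finset.range (k+1), |a (k+1) j| * (2 * εr + L * M) :=
                Finset.sum_le_sum hterm
            _ = (∑ j ∈ Finset.range (k+1), |a (k+1) j|) * (2 * εr + L * M) := by
                rw [Finset.sum_mul]
            _ ≤ A * (2 * εr + L * M) := by
                apply mul_le_mul_of_nonneg_right (hrow (k+1) his)
                nlinarith
        have hnorm1 : ‖Y (k+1) - Yhat (k+1)‖ ≤ h * γr := by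
          rw [norm_sub_rev]; exact htrunc
        have htot : ‖Y (k+1) - Z (k+1)‖ ≤ h * γr + h * (A * (2 * εr + L * M)) := by
          calc ‖Y (k+1) - Z (k+1)‖
              ≤ ‖Y (k+1) - Yhat (k+1)‖ + ‖Yhat (k+1) - Z (k+1)‖ :=
                norm_sub_le_norm_sub_add_norm_sub _ _ _
            _ ≤ h * γr + h * (A * (2 * εr + L * M)) := add_le_add hnorm1 hnorm2
        have hpk : (1:ℝ) ≤ (1 + c0) ^ k := one_le_pow₀ (by linarith)
        have hc0h : h * A * L ≤ c0 := by
          rw [hc0def]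
          have : h * (A * L) ≤ h0 * (A * L) :=
            mul_le_mul_of_nonneg_right hhh0 (by positivity)
          linarith only [this]
        have hpow_succ : (1 + c0) ^ (k+1) = (1 + c0) ^ k * (1 + c0) := pow_succ _ _
        have hfinalstep : h * γr + h * (A * (2 * εr + L * M)) ≤
            h * D * (εr + γr) * (1 + c0) ^ (k+1) := by
          have hx0 : 0 ≤ h * D * (εr + γr) := by
            apply mul_nonneg (by positivity) (by linarith)
          have e1 : h * γr + h * (A * (2 * εr)) ≤ h * D * (εr + γr) := by
            rw [hDdef]
            linarith only [mul_nonneg (mul_nonneg hh.le hA) hγr, mul_nonneg hh.le hεr]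
          have e2 : h * D * (εr + γr) ≤ M := by
            rw [hMdef]; exact le_mul_of_one_le_right hx0 hpk
          have e3 : h * A * L * M ≤ c0 * M := mul_le_mul_of_nonneg_right hc0h hM0
          have hRHS : h * D * (εr + γr) * (1 + c0) ^ (k+1) = M * (1 + c0) := by
            rw [hMdef, hpow_succ]; ring
          rw [hRHS]
          linarith only [e1, e2, e3]
        exact le_trans htot hfinalstep
  -- the final combination step
  obtain ⟨q, Uh, Vh, hUh, hVh, hsU0, hsV0, hfspan, hYhateq, _, hrank, htrunc⟩ := hfinal
  have h0fix : piLM Uh Vh (Y 0) = Y 0 := by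
    obtain ⟨hU0, hV0, hS0, hY0⟩ := hY 0 (lt_of_lt_of_le Nat.zero_lt_one hs)
    rw [hY0]; exact pi_fix_Y hUh hVh hsU0 hsV0
  have hexp : Yhat1 = Y 0 + h • ∑ i ∈ Finset.range s,
      b i • piLM Uh Vh (F (tk + h * c i) (Y i)) := by
    have h1 : Yhat1 = piLM Uh Vh (Y 0 + h • ∑ i ∈ Finset.range s,
        b i • F (tk + h * c i) (Y i)) := hYhateq
    rw [h1, map_add, _root_.map_smul, map_sum, h0fix]
    congr 2
    apply Finset.sum_congr rfl
    intro i _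
    rw [_root_.map_smul]
  set Zfin : Matrix (Fin n) (Fin m) ℝ :=
    Y 0 + h • ∑ i ∈ Finset.range s, b i • F (tk + h * c i) (Z i) with hZfindef
  have hRKbound : ‖Zfin - Phi tk (tk + h) (Y 0)‖ ≤ CL * h ^ (p + 1) :=
    hRK tk h hh hhh0 htk htkh (Y 0) Z rfl (fun i hi1 _ => hZrec i hi1)
  set Ms : ℝ := h * D * (εr + γr) * (1 + c0) ^ s with hMsdef
  have hMs0 : 0 ≤ Ms := by positivity
  have hkey' : ∀ i, i < s → ‖Y i - Z i‖ ≤ Ms := by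
    intro i his
    have h2 : (1 + c0) ^ i ≤ (1 + c0) ^ s := pow_le_pow_right₀ (by linarith) (le_of_lt his)
    calc ‖Y i - Z i‖ ≤ h * D * (εr + γr) * (1 + c0) ^ i := key i his
      _ ≤ Ms := by
        rw [hMsdef]
        exact mul_le_mul_of_nonneg_left h2 (mul_nonneg (by positivity) (by linarith))
  have hdiff : Yhat1 - Zfin = h • ∑ i ∈ Finset.range s,
      b i • (piLM Uh Vh (F (tk + h * c i) (Y i)) - F (tk + h * c i) (Z i)) := by
    rw [hexp, hZfindef, add_sub_add_left_eq_sub, ← smul_sub, ← Finset.sum_sub_distrib]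
    congr 1
    apply Finset.sum_congr rfl
    intro i _
    rw [smul_sub]
  have hterm : ∀ i ∈ Finset.range s,
      ‖b i • (piLM Uh Vh (F (tk + h * c i) (Y i)) - F (tk + h * c i) (Z i))‖
        ≤ |b i| * (2 * εr + L * Ms) := by
    intro i himem
    have his : i < s := Finset.mem_range.mp himem
    rw [norm_smul, Real.norm_eq_abs]
    by_cases hne : b i = 0
    · rw [hne, abs_zero, zero_mul, zero_mul]
    · apply mul_le_mul_of_nonneg_left _ (abs_nonneg _)
      obtain ⟨hsp1, hsp2, hsp3, hsp4⟩ := hfspan i his hne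
      have herr := pi_err hUh hVh hsp1 hsp2 hsp3 hsp4 (Ftang i his)
      have hlip := hLip (tk + h * c i) (hc i his).1 (hc i his).2 (Y i) (Z i)
      have hei := hkey' i his
      calc ‖piLM Uh Vh (F (tk + h * c i) (Y i)) - F (tk + h * c i) (Z i)‖
          ≤ ‖piLM Uh Vh (F (tk + h * c i) (Y i)) - F (tk + h * c i) (Y i)‖
            + ‖F (tk + h * c i) (Y i) - F (tk + h * c i) (Z i)‖ :=
            norm_sub_le_norm_sub_add_norm_sub _ _ _
        _ ≤ 2 * εr + L * ‖Y i - Z i‖ := add_le_add herr hlip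
        _ ≤ 2 * εr + L * Ms := by
          linarith only [mul_le_mul_of_nonneg_left hei hL.le]
  have hnorm2 : ‖Yhat1 - Zfin‖ ≤ h * (Bs * (2 * εr + L * Ms)) := by
    rw [hdiff, norm_smul, Real.norm_eq_abs, abs_of_pos hh]
    apply mul_le_mul_of_nonneg_left _ (le_of_lt hh)
    calc ‖∑ i ∈ Finset.range s,
          b i • (piLM Uh Vh (F (tk + h * c i) (Y i)) - F (tk + h * c i) (Z i))‖
        ≤ ∑ i ∈ Finset.range s,
          ‖b i • (piLM Uh Vh (F (tk + h * c i) (Y i)) - F (tk + h * c i) (Z i))‖ :=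
          norm_sum_le _ _
      _ ≤ ∑ i ∈ Finset.range s, |b i| * (2 * εr + L * Ms) := Finset.sum_le_sum hterm
      _ = Bs * (2 * εr + L * Ms) := by rw [← Finset.sum_mul]
  have hnorm1 : ‖Yk1 - Yhat1‖ ≤ h * γr := by rw [norm_sub_rev]; exact htrunc
  have t1 := norm_sub_le_norm_sub_add_norm_sub Yk1 Yhat1 (Phi tk (tk + h) (Y 0))
  have t2 := norm_sub_le_norm_sub_add_norm_sub Yhat1 Zfin (Phi tk (tk + h) (Y 0))
  have htot : ‖Yk1 - Phi tk (tk + h) (Y 0)‖ ≤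
      h * γr + h * (Bs * (2 * εr + L * Ms)) + CL * h ^ (p + 1) := by
    linarith only [t1, t2, hnorm1, hnorm2, hRKbound]
  have hps : (1:ℝ) ≤ (1 + c0) ^ s := one_le_pow₀ (by linarith)
  have hhp : (0:ℝ) ≤ h ^ p := by positivity
  have hppow : h ^ (p + 1) = h * h ^ p := by rw [pow_succ]; ring
  have hMsle : Ms ≤ h0 * D * (εr + γr) * (1 + c0) ^ s := by
    rw [hMsdef]
    have : h * (D * (εr + γr) * (1 + c0) ^ s) ≤ h0 * (D * (εr + γr) * (1 + c0) ^ s) :=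
      mul_le_mul_of_nonneg_right hhh0 (by positivity)
    linarith only [this]
  calc ‖Yk1 - Phi tk (tk + h) (Y 0)‖
      ≤ h * γr + h * (Bs * (2 * εr + L * Ms)) + CL * h ^ (p + 1) := htot
    _ ≤ Cloc * h * (εr + γr + h ^ p) := by
        rw [hppow, hClocdef]
        have e1 : h * γr + h * (Bs * (2 * εr)) ≤ h * (1 + 2 * Bs) * (εr + γr) := by
          linarith only [mul_nonneg hh.le hεr, mul_nonneg (mul_nonneg hh.le hBs) hγr]
        have e2 : h * (Bs * (L * Ms)) ≤
            h * (L * Bs * h0 * D * (1 + c0) ^ s) * (εr + γr) := by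
          have h1 : Bs * L * Ms ≤ Bs * L * (h0 * D * (εr + γr) * (1 + c0) ^ s) := by
            apply mul_le_mul_of_nonneg_left hMsle (by positivity)
          linarith only [mul_le_mul_of_nonneg_left h1 hh.le]
        have e3 : CL * (h * h ^ p) ≤ CL * h * (εr + γr + h ^ p) := by
          linarith only [mul_nonneg (mul_nonneg hCL.le hh.le) hεr,
            mul_nonneg (mul_nonneg hCL.le hh.le) hγr]
        have e4 : h * (1 + 2 * Bs) * (εr + γr) ≤ h * (1 + 2 * Bs) * (εr + γr + h ^ p) := by
          linarith only [mul_nonneg (mul_nonneg hh.le (by linarith : (0:ℝ) ≤ 1 + 2 * Bs)) hhp]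
        have e5 : h * (L * Bs * h0 * D * (1 + c0) ^ s) * (εr + γr) ≤
            h * (L * Bs * h0 * D * (1 + c0) ^ s) * (εr + γr + h ^ p) := by
          have hcoef : 0 ≤ L * Bs * h0 * D * (1 + c0) ^ s := by positivity
          linarith only [mul_nonneg (mul_nonneg hh.le hcoef) hhp]
        linarith only [e1, e2, e3, e4, e5]
end

section
/- Under Assumptions 1 and 2, the global error of the Runge–Kutta BUG integrator based on an explicit s-stage Runge–Kutta method of order p is bounded by: let A(t) = Φ^t_F(A_0) be the exact solution of Ẏ = F(t,Y) with A(0) = A_0, let Y_0 ∈ M_r, and let δ_r = ‖Y_0 − A_0‖_F. Then there exist constants C_glob > 0 and h_0 > 0, with C_glob independent of the rank r and of the step size h, such that for all 0 < h ≤ h_0 and all k with 0 ≤ t_k = k h ≤ T, the iterates Y_k of the Runge–Kutta BUG integrator satisfy ‖Y_k − A(t_k)‖_F ≤ C_glob ( δ_r + ε_r + γ_r + h^p ). -/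
/-!
STATEMENT 7 (Theorem 2 of the paper): under Assumptions 1 and 2, the global
error of the Runge–Kutta BUG integrator based on an explicit s-stage
Runge–Kutta method of order p satisfies
‖Y_k − A(t_k)‖_F ≤ C_glob (δ_r + ε_r + γ_r + h^p) for 0 ≤ t_k = k h ≤ T,
with C_glob > 0 independent of the rank r and the step size h ≤ h_0, where
δ_r = ‖Y_0 − A_0‖_F.
-/

open Matrix

attribute [local instance] Matrix.frobeniusNormedAddCommGroup Matrix.frobeniusNormedSpace

/-- One step `Y_k ↦ Y_{k+1}` of the Runge–Kutta BUG integrator with rank `r`,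
explicit `s`-stage Runge–Kutta coefficients `a`, weights `b`, nodes `c`,
step size `h`, initial time `tk`, and truncation-error constant `γr`. -/
def RKBUGStep (s : ℕ) (a : ℕ → ℕ → ℝ) (b c : ℕ → ℝ) {n m : ℕ} (r : ℕ)
    (F : ℝ → Matrix (Fin n) (Fin m) ℝ → Matrix (Fin n) (Fin m) ℝ)
    (tk h γr : ℝ) (Yk Yk1 : Matrix (Fin n) (Fin m) ℝ) : Prop :=
  ∃ (Y Yhat : ℕ → Matrix (Fin n) (Fin m) ℝ)
    (U : ℕ → Matrix (Fin n) (Fin r) ℝ) (S : ℕ → Matrix (Fin r) (Fin r) ℝ)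
    (V : ℕ → Matrix (Fin m) (Fin r) ℝ),
    -- the first stage is Y_k, and every stage lies in M_r
    Y 0 = Yk ∧
    (∀ i < s, (U i)ᵀ * U i = 1 ∧ (V i)ᵀ * V i = 1 ∧ IsUnit (S i) ∧
      Y i = U i * S i * (V i)ᵀ) ∧
    -- the BUG step defining stage i (for 1 ≤ i < s): augmented bases whose
    -- spans contain the required columns, Galerkin projection, best rank-r
    -- truncation, and truncation error ≤ h γr
    (∀ i, 1 ≤ i → i < s →
      ∃ (q : ℕ) (Uh : Matrix (Fin n) (Fin q) ℝ) (Vh : Matrix (Fin m) (Fin q) ℝ),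
        Uhᵀ * Uh = 1 ∧ Vhᵀ * Vh = 1 ∧
        spanSubset Uh (U 0) ∧ spanSubset Vh (V 0) ∧
        (∀ j, j < i → a i j ≠ 0 →
          spanSubset Uh (U j) ∧
          spanSubset Uh (F (tk + h * c j) (Y j) * V j) ∧
          spanSubset Vh (V j) ∧
          spanSubset Vh ((F (tk + h * c j) (Y j))ᵀ * U j)) ∧
        Yhat i = Uh * Uhᵀ *
            (Yk + h • ∑ j ∈ Finset.range i,
              a i j • F (tk + h * c j) (Y j)) * Vh * Vhᵀ ∧
        (∀ W : Matrix (Fin n) (Fin m) ℝ, W.rank ≤ r →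
          ‖Yhat i - Y i‖ ≤ ‖Yhat i - W‖) ∧
        ‖Yhat i - Y i‖ ≤ h * γr) ∧
    -- the final (update) step producing Y_{k+1} = ⟦Ŷ_{k+1}⟧_r
    (∃ (q : ℕ) (Uh : Matrix (Fin n) (Fin q) ℝ) (Vh : Matrix (Fin m) (Fin q) ℝ)
       (Yhat1 : Matrix (Fin n) (Fin m) ℝ),
        Uhᵀ * Uh = 1 ∧ Vhᵀ * Vh = 1 ∧
        spanSubset Uh (U 0) ∧ spanSubset Vh (V 0) ∧
        (∀ i < s, b i ≠ 0 →
          spanSubset Uh (U i) ∧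
          spanSubset Uh (F (tk + h * c i) (Y i) * V i) ∧
          spanSubset Vh (V i) ∧
          spanSubset Vh ((F (tk + h * c i) (Y i))ᵀ * U i)) ∧
        Yhat1 = Uh * Uhᵀ *
            (Yk + h • ∑ i ∈ Finset.range s,
              b i • F (tk + h * c i) (Y i)) * Vh * Vhᵀ ∧
        (∀ W : Matrix (Fin n) (Fin m) ℝ, W.rank ≤ r →
          ‖Yhat1 - Yk1‖ ≤ ‖Yhat1 - W‖) ∧
        Yk1.rank ≤ r ∧
        ‖Yhat1 - Yk1‖ ≤ h * γr)

namespace RKBUGAux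

variable {n m l w : ℕ}

lemma frob_sq (A : Matrix (Fin n) (Fin m) ℝ) : ‖A‖ ^ 2 = ∑ i, ∑ j, (A i j) ^ 2 := by
  rw [Matrix.frobenius_norm_def]
  rw [← Real.rpow_natCast ((∑ i, ∑ j, ‖A i j‖ ^ (2:ℝ)) ^ (1 / 2 : ℝ)) 2,
    ← Real.rpow_mul (by positivity)]
  norm_num

lemma norm_le_of_sq_le {x y : ℝ} (_hx : 0 ≤ x) (hy : 0 ≤ y) (h : x ^ 2 ≤ y ^ 2) : x ≤ y := by
  nlinarith

/-- Pythagoras / contraction for a symmetric idempotent acting on the left. -/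
lemma proj_contract (P : Matrix (Fin n) (Fin n) ℝ) (hsym : Pᵀ = P) (hid : P * P = P)
    (X : Matrix (Fin n) (Fin m) ℝ) : ‖P * X‖ ≤ ‖X‖ ∧ ‖X - P * X‖ ≤ ‖X‖ := by
  have key : (P * X)ᵀ * (X - P * X) = 0 := by
    rw [Matrix.transpose_mul, hsym, Matrix.mul_sub]
    rw [show Xᵀ * P * (P * X) = Xᵀ * (P * P) * X by
      rw [Matrix.mul_assoc, Matrix.mul_assoc, Matrix.mul_assoc], hid, Matrix.mul_assoc, sub_self]
  have cross : ∑ i, ∑ j, (P * X) i j * (X - P * X) i j = 0 := by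
    rw [Finset.sum_comm]
    have : ∀ j, ∑ i, (P * X) i j * (X - P * X) i j = ((P * X)ᵀ * (X - P * X)) j j := by
      intro j; simp [Matrix.mul_apply, Matrix.transpose_apply, mul_comm]
    simp_rw [this, key]
    simp
  have pyth : ‖X‖ ^ 2 = ‖P * X‖ ^ 2 + ‖X - P * X‖ ^ 2 := by
    rw [frob_sq, frob_sq, frob_sq]
    have expand : ∀ i j, (X i j) ^ 2 =
        ((P * X) i j) ^ 2 + ((X - P * X) i j) ^ 2 + 2 * ((P * X) i j * (X - P * X) i j) := by
      intro i j
      have : X i j = (P * X) i j + (X - P * X) i j := by simp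
      rw [this]; ring
    calc ∑ i, ∑ j, (X i j) ^ 2
        = ∑ i, ∑ j, (((P * X) i j) ^ 2 + ((X - P * X) i j) ^ 2
            + 2 * ((P * X) i j * (X - P * X) i j)) := by
          exact Finset.sum_congr rfl fun i _ => Finset.sum_congr rfl fun j _ => expand i j
      _ = (∑ i, ∑ j, ((P * X) i j) ^ 2) + (∑ i, ∑ j, ((X - P * X) i j) ^ 2)
            + 2 * (∑ i, ∑ j, (P * X) i j * (X - P * X) i j) := by
          simp [Finset.sum_add_distrib, Finset.mul_sum]
      _ = _ := by rw [cross]; ring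
  constructor
  · refine norm_le_of_sq_le (norm_nonneg _) (norm_nonneg _) ?_
    nlinarith [sq_nonneg ‖X - P * X‖]
  · refine norm_le_of_sq_le (norm_nonneg _) (norm_nonneg _) ?_
    nlinarith [sq_nonneg ‖P * X‖]

lemma proj_contract_right (Q : Matrix (Fin m) (Fin m) ℝ) (hsym : Qᵀ = Q) (hid : Q * Q = Q)
    (X : Matrix (Fin n) (Fin m) ℝ) : ‖X * Q‖ ≤ ‖X‖ ∧ ‖X - X * Q‖ ≤ ‖X‖ := by
  have h1 := proj_contract Q hsym hid Xᵀ
  constructor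
  · have : ‖X * Q‖ = ‖Q * Xᵀ‖ := by
      rw [← Matrix.frobenius_norm_transpose (X * Q), Matrix.transpose_mul, hsym]
    rw [this, ← Matrix.frobenius_norm_transpose X]
    exact h1.1
  · have : ‖X - X * Q‖ = ‖Xᵀ - Q * Xᵀ‖ := by
      rw [← Matrix.frobenius_norm_transpose (X - X * Q), Matrix.transpose_sub,
        Matrix.transpose_mul, hsym]
    rw [this, ← Matrix.frobenius_norm_transpose X]
    exact h1.2

end RKBUGAux

namespace RKBUGAux

variable {n m l w q r : ℕ}

/-- Left projection fixes matrices whose columns lie in the span. -/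
lemma span_fixL {Uh : Matrix (Fin n) (Fin q) ℝ} (hU : Uhᵀ * Uh = 1)
    {X : Matrix (Fin n) (Fin l) ℝ} (h : spanSubset Uh X) : Uh * Uhᵀ * X = X := by
  obtain ⟨M, rfl⟩ := h
  rw [Matrix.mul_assoc, ← Matrix.mul_assoc Uhᵀ Uh M, hU, Matrix.one_mul]

lemma span_fixL' {Uh : Matrix (Fin n) (Fin q) ℝ} (hU : Uhᵀ * Uh = 1)
    {X : Matrix (Fin n) (Fin l) ℝ} (h : spanSubset Uh X) (T : Matrix (Fin l) (Fin w) ℝ) :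
    Uh * Uhᵀ * (X * T) = X * T := by
  rw [← Matrix.mul_assoc, span_fixL hU h]

/-- Right projection fixes matrices whose rows lie in the span. -/
lemma span_fixR {Vh : Matrix (Fin m) (Fin q) ℝ} (hV : Vhᵀ * Vh = 1)
    {W : Matrix (Fin m) (Fin l) ℝ} (h : spanSubset Vh W) : Wᵀ * (Vh * Vhᵀ) = Wᵀ := by
  obtain ⟨M, rfl⟩ := h
  rw [Matrix.transpose_mul, Matrix.mul_assoc, ← Matrix.mul_assoc Vhᵀ Vh Vhᵀ, hV, Matrix.one_mul]

lemma span_fixL2' {Uh : Matrix (Fin n) (Fin q) ℝ} (hU : Uhᵀ * Uh = 1)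
    {X : Matrix (Fin n) (Fin l) ℝ} (h : spanSubset Uh X) (T : Matrix (Fin l) (Fin w) ℝ) :
    Uh * (Uhᵀ * (X * T)) = X * T := by
  obtain ⟨M, rfl⟩ := h
  simp only [← Matrix.mul_assoc]
  rw [show Uh * Uhᵀ * Uh = Uh by rw [Matrix.mul_assoc, hU, Matrix.mul_one]]

lemma tangentProj_transpose {U : Matrix (Fin n) (Fin r) ℝ} {V : Matrix (Fin m) (Fin r) ℝ}
    {Z : Matrix (Fin n) (Fin m) ℝ} :
    (tangentProj U V Z)ᵀ = tangentProj V U Zᵀ := by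
  unfold tangentProj
  simp only [Matrix.transpose_add, Matrix.transpose_sub, Matrix.transpose_mul,
    Matrix.transpose_transpose, Matrix.mul_assoc]
  abel

/-- The left projection fixes the tangent-space projection of `Z` at `(U, V)`,
provided the span contains `U` and `Z * V`. -/
lemma projL_fix_tangent {Uh : Matrix (Fin n) (Fin q) ℝ} (hUh : Uhᵀ * Uh = 1)
    {U : Matrix (Fin n) (Fin r) ℝ} {V : Matrix (Fin m) (Fin r) ℝ}
    {Z : Matrix (Fin n) (Fin m) ℝ}
    (hU : spanSubset Uh U) (hZV : spanSubset Uh (Z * V)) :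
    Uh * Uhᵀ * tangentProj U V Z = tangentProj U V Z := by
  unfold tangentProj
  simp only [Matrix.mul_add, Matrix.mul_sub, Matrix.mul_assoc]
  rw [show Z * (V * Vᵀ) = Z * V * Vᵀ from (Matrix.mul_assoc _ _ _).symm]
  rw [span_fixL2' hUh hU, span_fixL2' hUh hU, span_fixL2' hUh hZV]

lemma proj_symm {Vh : Matrix (Fin m) (Fin q) ℝ} : (Vh * Vhᵀ)ᵀ = Vh * Vhᵀ := by
  rw [Matrix.transpose_mul, Matrix.transpose_transpose]

/-- The right projection fixes the tangent-space projection of `Z` at `(U, V)`,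
provided the span contains `V` and `Zᵀ * U`. -/
lemma projR_fix_tangent {Vh : Matrix (Fin m) (Fin q) ℝ} (hVh : Vhᵀ * Vh = 1)
    {U : Matrix (Fin n) (Fin r) ℝ} {V : Matrix (Fin m) (Fin r) ℝ}
    {Z : Matrix (Fin n) (Fin m) ℝ}
    (hV : spanSubset Vh V) (hZU : spanSubset Vh (Zᵀ * U)) :
    tangentProj U V Z * (Vh * Vhᵀ) = tangentProj U V Z := by
  have key := projL_fix_tangent hVh hV hZU
  calc tangentProj U V Z * (Vh * Vhᵀ)
      = ((Vh * Vhᵀ)ᵀ * (tangentProj U V Z)ᵀ)ᵀ := by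
        rw [← Matrix.transpose_mul, Matrix.transpose_transpose]
    _ = (Vh * Vhᵀ * tangentProj V U Zᵀ)ᵀ := by rw [tangentProj_transpose, proj_symm]
    _ = (tangentProj V U Zᵀ)ᵀ := by rw [key]
    _ = tangentProj U V Z := by rw [tangentProj_transpose, Matrix.transpose_transpose]

end RKBUGAux

/-- The classical explicit Runge–Kutta stages. -/
noncomputable def RKStage {n m : ℕ} (a : ℕ → ℕ → ℝ) (c : ℕ → ℝ)
    (F : ℝ → Matrix (Fin n) (Fin m) ℝ → Matrix (Fin n) (Fin m) ℝ)
    (tk h : ℝ) (Z0 : Matrix (Fin n) (Fin m) ℝ) : ℕ → Matrix (Fin n) (Fin m) ℝ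
  | i => Z0 + h • ∑ j ∈ (Finset.range i).attach,
      a i j • F (tk + h * c j) (RKStage a c F tk h Z0 j)
  decreasing_by exact Finset.mem_range.mp j.2

namespace RKBUGAux

lemma RKStage_eq {n m : ℕ} (a : ℕ → ℕ → ℝ) (c : ℕ → ℝ)
    (F : ℝ → Matrix (Fin n) (Fin m) ℝ → Matrix (Fin n) (Fin m) ℝ)
    (tk h : ℝ) (Z0 : Matrix (Fin n) (Fin m) ℝ) (i : ℕ) :
    RKStage a c F tk h Z0 i = Z0 + h • ∑ j ∈ Finset.range i,
      a i j • F (tk + h * c j) (RKStage a c F tk h Z0 j) := by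
  rw [RKStage]
  exact congrArg (fun S => Z0 + h • S)
    (Finset.sum_attach _ fun j => a i j • F (tk + h * c j) (RKStage a c F tk h Z0 j))

lemma RKStage_zero {n m : ℕ} (a : ℕ → ℕ → ℝ) (c : ℕ → ℝ)
    (F : ℝ → Matrix (Fin n) (Fin m) ℝ → Matrix (Fin n) (Fin m) ℝ)
    (tk h : ℝ) (Z0 : Matrix (Fin n) (Fin m) ℝ) :
    RKStage a c F tk h Z0 0 = Z0 := by
  rw [RKStage_eq]; simp

end RKBUGAux

namespace RKBUGAux

variable {n m l w q r : ℕ}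

lemma span_fixR' {Vh : Matrix (Fin m) (Fin q) ℝ} (hV : Vhᵀ * Vh = 1)
    {W : Matrix (Fin m) (Fin l) ℝ} (h : spanSubset Vh W) (T : Matrix (Fin w) (Fin l) ℝ) :
    T * Wᵀ * (Vh * Vhᵀ) = T * Wᵀ := by
  rw [Matrix.mul_assoc, span_fixR hV h]

end RKBUGAux

namespace RKBUGAux

open Finset

lemma sum_abs_le_of_subset {s' i : ℕ} (f : ℕ → ℝ) (hij : i ≤ s') :
    (∑ j ∈ Finset.range i, |f j|) ≤ ∑ j ∈ Finset.range s', |f j| :=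
  Finset.sum_le_sum_of_subset_of_nonneg (Finset.range_subset_range.mpr hij)
    (fun j _ _ => abs_nonneg _)

set_option maxHeartbeats 2000000 in
lemma local_error {n m r s p : ℕ} (hs : 1 ≤ s) (a : ℕ → ℕ → ℝ) (b c : ℕ → ℝ)
    (L h0 T CL A εr γr tk h : ℝ)
    (hL : 0 < L) (hh0 : 0 < h0) (hCL : 0 ≤ CL)
    (hA0 : 1 ≤ A)
    (hAa : ∀ i < s, (∑ j ∈ Finset.range i, |a i j|) ≤ A)
    (hAb : (∑ i ∈ Finset.range s, |b i|) ≤ A)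
    (hc : ∀ i < s, 0 ≤ c i ∧ c i ≤ 1)
    (hεr : 0 ≤ εr) (hγr : 0 ≤ γr)
    (F : ℝ → Matrix (Fin n) (Fin m) ℝ → Matrix (Fin n) (Fin m) ℝ)
    (hLip : ∀ t, 0 ≤ t → t ≤ T → ∀ X Z : Matrix (Fin n) (Fin m) ℝ,
      ‖F t X - F t Z‖ ≤ L * ‖X - Z‖)
    (heps : ∀ t, 0 ≤ t → t ≤ T →
      ∀ (U : Matrix (Fin n) (Fin r) ℝ) (S : Matrix (Fin r) (Fin r) ℝ)
        (V : Matrix (Fin m) (Fin r) ℝ), Uᵀ * U = 1 → Vᵀ * V = 1 → IsUnit S →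
        ‖F t (U * S * Vᵀ) - tangentProj U V (F t (U * S * Vᵀ))‖ ≤ εr)
    (ht0 : 0 ≤ tk) (hh : 0 < h) (hhh0 : h ≤ h0) (htT : tk + h ≤ T)
    (Yk Yk1 W : Matrix (Fin n) (Fin m) ℝ)
    (hstep : RKBUGStep s a b c r F tk h γr Yk Yk1)
    (hRK : ‖Yk + h • ∑ i ∈ Finset.range s, b i •
        F (tk + h * c i) (RKStage a c F tk h Yk i) - W‖ ≤ CL * h ^ (p + 1)) :
    ‖Yk1 - W‖ ≤ h * ((1 + 2*A) + h0*L*A*((1 + 2*A)*(1 + h0*L*A)^s) + CL) * (εr + γr + h^p) := by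
  obtain ⟨Y, Yhat, U, S, V, hY0, hM, hstage, hfin⟩ := hstep
  have hs0 : 0 < s := hs
  set Zs := RKStage a c F tk h Yk with hZsdef
  have hZs0 : Zs 0 = Yk := RKStage_zero a c F tk h Yk
  have htj : ∀ j < s, 0 ≤ tk + h * c j ∧ tk + h * c j ≤ T := by
    intro j hj
    refine ⟨add_nonneg ht0 (mul_nonneg hh.le (hc j hj).1), ?_⟩
    have := (hc j hj).2
    nlinarith
  -- Y₀ = Yk lies in M_r
  obtain ⟨hU0o, hV0o, hS0u, hY0eq⟩ := hM 0 hs0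
  have hYkeq : Yk = U 0 * S 0 * (V 0)ᵀ := hY0 ▸ hY0eq
  -- one-sided projection estimates for the vector field at the stages
  have hFdiffP : ∀ (Q' : ℕ) (Uh : Matrix (Fin n) (Fin Q') ℝ), Uhᵀ * Uh = 1 →
      ∀ j < s, spanSubset Uh (U j) → spanSubset Uh (F (tk + h * c j) (Y j) * V j) →
      ‖F (tk + h * c j) (Y j) - Uh * Uhᵀ * F (tk + h * c j) (Y j)‖ ≤ εr := by
    intro Q' Uh hUh j hj hsU hsFV
    obtain ⟨hUo, hVo, hSu, hYj⟩ := hM j hj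
    set Fj := F (tk + h * c j) (Y j) with hFjdef
    set Ej := Fj - tangentProj (U j) (V j) Fj with hEjdef
    have hEnorm : ‖Ej‖ ≤ εr := by
      rw [hEjdef, hFjdef, hYj]
      exact heps _ (htj j hj).1 (htj j hj).2 (U j) (S j) (V j) hUo hVo hSu
    have hfix : Uh * Uhᵀ * tangentProj (U j) (V j) Fj = tangentProj (U j) (V j) Fj :=
      projL_fix_tangent hUh hsU hsFV
    have hsplit : Fj - Uh * Uhᵀ * Fj = Ej - Uh * Uhᵀ * Ej := by
      rw [hEjdef, Matrix.mul_sub, hfix]; abel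
    have hidP : (Uh * Uhᵀ) * (Uh * Uhᵀ) = Uh * Uhᵀ := by
      rw [Matrix.mul_assoc, ← Matrix.mul_assoc Uhᵀ Uh Uhᵀ, hUh, Matrix.one_mul]
    calc ‖Fj - Uh * Uhᵀ * Fj‖ = ‖Ej - (Uh * Uhᵀ) * Ej‖ := by rw [hsplit]
      _ ≤ ‖Ej‖ := (proj_contract (Uh * Uhᵀ) proj_symm hidP Ej).2
      _ ≤ εr := hEnorm
  have hFdiffQ : ∀ (Q' : ℕ) (Vh : Matrix (Fin m) (Fin Q') ℝ), Vhᵀ * Vh = 1 →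
      ∀ j < s, spanSubset Vh (V j) → spanSubset Vh ((F (tk + h * c j) (Y j))ᵀ * U j) →
      ‖F (tk + h * c j) (Y j) - F (tk + h * c j) (Y j) * (Vh * Vhᵀ)‖ ≤ εr := by
    intro Q' Vh hVh j hj hsV hsFU
    obtain ⟨hUo, hVo, hSu, hYj⟩ := hM j hj
    set Fj := F (tk + h * c j) (Y j) with hFjdef
    set Ej := Fj - tangentProj (U j) (V j) Fj with hEjdef
    have hEnorm : ‖Ej‖ ≤ εr := by
      rw [hEjdef, hFjdef, hYj]
      exact heps _ (htj j hj).1 (htj j hj).2 (U j) (S j) (V j) hUo hVo hSu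
    have hfix : tangentProj (U j) (V j) Fj * (Vh * Vhᵀ) = tangentProj (U j) (V j) Fj :=
      projR_fix_tangent hVh hsV hsFU
    have hsplit : Fj - Fj * (Vh * Vhᵀ) = Ej - Ej * (Vh * Vhᵀ) := by
      rw [hEjdef, Matrix.sub_mul, hfix]; abel
    have hidQ : (Vh * Vhᵀ) * (Vh * Vhᵀ) = Vh * Vhᵀ := by
      rw [Matrix.mul_assoc, ← Matrix.mul_assoc Vhᵀ Vh Vhᵀ, hVh, Matrix.one_mul]
    calc ‖Fj - Fj * (Vh * Vhᵀ)‖ = ‖Ej - Ej * (Vh * Vhᵀ)‖ := by rw [hsplit]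
      _ ≤ ‖Ej‖ := (proj_contract_right (Vh * Vhᵀ) proj_symm hidQ Ej).2
      _ ≤ εr := hEnorm
  -- the two-sided projection estimate used for every Galerkin step
  have keyEst : ∀ (Q' : ℕ) (Uh : Matrix (Fin n) (Fin Q') ℝ) (Vh : Matrix (Fin m) (Fin Q') ℝ),
      Uhᵀ * Uh = 1 → Vhᵀ * Vh = 1 → spanSubset Uh (U 0) → spanSubset Vh (V 0) →
      ∀ (w' : ℕ) (coef : ℕ → ℝ), w' ≤ s →
      (∀ j, j < w' → coef j ≠ 0 →
        spanSubset Uh (U j) ∧ spanSubset Uh (F (tk + h * c j) (Y j) * V j) ∧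
        spanSubset Vh (V j) ∧ spanSubset Vh ((F (tk + h * c j) (Y j))ᵀ * U j)) →
      ‖(Yk + h • ∑ j ∈ Finset.range w', coef j • F (tk + h * c j) (Y j)) -
        Uh * Uhᵀ * (Yk + h • ∑ j ∈ Finset.range w', coef j • F (tk + h * c j) (Y j))
          * Vh * Vhᵀ‖
        ≤ 2 * (h * ((∑ j ∈ Finset.range w', |coef j|) * εr)) := by
    intro Q' Uh Vh hUh hVh hsU0 hsV0 w' coef hw' hspans
    set G := Yk + h • ∑ j ∈ Finset.range w', coef j • F (tk + h * c j) (Y j) with hGdef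
    have hPYk : Uh * Uhᵀ * Yk = Yk := by
      rw [hYkeq, Matrix.mul_assoc (U 0) (S 0) ((V 0)ᵀ)]
      exact span_fixL' hUh hsU0 _
    have hYkQ : Yk * (Vh * Vhᵀ) = Yk := by
      rw [hYkeq]
      exact span_fixR' hVh hsV0 _
    have hL1 : ‖G - Uh * Uhᵀ * G‖ ≤ h * ((∑ j ∈ Finset.range w', |coef j|) * εr) := by
      have hG : G - Uh * Uhᵀ * G = h • ∑ j ∈ Finset.range w',
          coef j • (F (tk + h * c j) (Y j) - Uh * Uhᵀ * F (tk + h * c j) (Y j)) := by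
        rw [hGdef]
        simp only [Matrix.mul_add, Matrix.mul_smul, Matrix.mul_sum, hPYk, smul_sub,
          Finset.sum_sub_distrib]
        abel
      rw [hG, norm_smul, Real.norm_eq_abs, abs_of_pos hh]
      refine mul_le_mul_of_nonneg_left ?_ hh.le
      refine le_trans (norm_sum_le _ _) ?_
      rw [Finset.sum_mul]
      refine Finset.sum_le_sum ?_
      intro j hj
      rw [norm_smul, Real.norm_eq_abs]
      rcases eq_or_ne (coef j) 0 with hz | hz
      · simp [hz]
      · refine mul_le_mul_of_nonneg_left ?_ (abs_nonneg _)
        have hjs : j < s := lt_of_lt_of_le (Finset.mem_range.mp hj) hw'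
        obtain ⟨h1, h2, _, _⟩ := hspans j (Finset.mem_range.mp hj) hz
        exact hFdiffP Q' Uh hUh j hjs h1 h2
    have hL2 : ‖G - G * (Vh * Vhᵀ)‖ ≤ h * ((∑ j ∈ Finset.range w', |coef j|) * εr) := by
      have hG : G - G * (Vh * Vhᵀ) = h • ∑ j ∈ Finset.range w',
          coef j • (F (tk + h * c j) (Y j) - F (tk + h * c j) (Y j) * (Vh * Vhᵀ)) := by
        rw [hGdef]
        simp only [Matrix.add_mul, Matrix.smul_mul, Matrix.sum_mul, hYkQ, smul_sub,
          Finset.sum_sub_distrib]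
        abel
      rw [hG, norm_smul, Real.norm_eq_abs, abs_of_pos hh]
      refine mul_le_mul_of_nonneg_left ?_ hh.le
      refine le_trans (norm_sum_le _ _) ?_
      rw [Finset.sum_mul]
      refine Finset.sum_le_sum ?_
      intro j hj
      rw [norm_smul, Real.norm_eq_abs]
      rcases eq_or_ne (coef j) 0 with hz | hz
      · simp [hz]
      · refine mul_le_mul_of_nonneg_left ?_ (abs_nonneg _)
        have hjs : j < s := lt_of_lt_of_le (Finset.mem_range.mp hj) hw'
        obtain ⟨_, _, h3, h4⟩ := hspans j (Finset.mem_range.mp hj) hz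
        exact hFdiffQ Q' Vh hVh j hjs h3 h4
    have hidP : (Uh * Uhᵀ) * (Uh * Uhᵀ) = Uh * Uhᵀ := by
      rw [Matrix.mul_assoc, ← Matrix.mul_assoc Uhᵀ Uh Uhᵀ, hUh, Matrix.one_mul]
    have hsplit : G - Uh * Uhᵀ * G * Vh * Vhᵀ =
        (G - Uh * Uhᵀ * G) + (Uh * Uhᵀ) * (G - G * (Vh * Vhᵀ)) := by
      rw [Matrix.mul_sub]
      rw [show Uh * Uhᵀ * G * Vh * Vhᵀ = Uh * Uhᵀ * (G * (Vh * Vhᵀ)) by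
        simp only [Matrix.mul_assoc]]
      abel
    rw [hsplit]
    calc ‖(G - Uh * Uhᵀ * G) + (Uh * Uhᵀ) * (G - G * (Vh * Vhᵀ))‖
        ≤ ‖G - Uh * Uhᵀ * G‖ + ‖(Uh * Uhᵀ) * (G - G * (Vh * Vhᵀ))‖ := norm_add_le _ _
      _ ≤ ‖G - Uh * Uhᵀ * G‖ + ‖G - G * (Vh * Vhᵀ)‖ := by
          exact add_le_add le_rfl (proj_contract (Uh * Uhᵀ) proj_symm hidP _).1
      _ ≤ 2 * (h * ((∑ j ∈ Finset.range w', |coef j|) * εr)) := by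
          have := add_le_add hL1 hL2; linarith
  -- basic positivity facts
  have hA0' : (0:ℝ) ≤ A := le_trans zero_le_one hA0
  have hq0 : (0:ℝ) ≤ h0 * L * A := mul_nonneg (mul_nonneg hh0.le hL.le) hA0'
  have hbase : (1:ℝ) ≤ 1 + h0 * L * A := by linarith
  have hE0 : (0:ℝ) ≤ εr + γr := by linarith
  -- Lipschitz comparison of the Galerkin sums with the classical RK sums
  have hGZ : ∀ (w' : ℕ) (coef : ℕ → ℝ), w' ≤ s →
      ‖(Yk + h • ∑ j ∈ Finset.range w', coef j • F (tk + h * c j) (Y j)) -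
        (Yk + h • ∑ j ∈ Finset.range w', coef j • F (tk + h * c j) (Zs j))‖
        ≤ h * ∑ j ∈ Finset.range w', |coef j| * (L * ‖Y j - Zs j‖) := by
    intro w' coef hw'
    have hdiff : (Yk + h • ∑ j ∈ Finset.range w', coef j • F (tk + h * c j) (Y j)) -
        (Yk + h • ∑ j ∈ Finset.range w', coef j • F (tk + h * c j) (Zs j)) =
        h • ∑ j ∈ Finset.range w',
          coef j • (F (tk + h * c j) (Y j) - F (tk + h * c j) (Zs j)) := by
      simp only [smul_sub, Finset.sum_sub_distrib]
      abel
    rw [hdiff, norm_smul, Real.norm_eq_abs, abs_of_pos hh]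
    refine mul_le_mul_of_nonneg_left ?_ hh.le
    refine le_trans (norm_sum_le _ _) (Finset.sum_le_sum ?_)
    intro j hj
    rw [norm_smul, Real.norm_eq_abs]
    refine mul_le_mul_of_nonneg_left ?_ (abs_nonneg _)
    have hjs : j < s := lt_of_lt_of_le (Finset.mem_range.mp hj) hw'
    exact hLip _ (htj j hjs).1 (htj j hjs).2 _ _
  -- bound on the stages by strong induction
  have stageB : ∀ i, i < s →
      ‖Y i - Zs i‖ ≤ h * ((1 + 2*A) * (1 + h0*L*A)^i) * (εr + γr) := by
    intro i
    induction i using Nat.strong_induction_on with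
    | _ i ih =>
      intro hi
      rcases Nat.eq_zero_or_pos i with rfl | hpos
      · rw [hY0, hZs0, sub_self, norm_zero]
        have h1 : (0:ℝ) ≤ (1 + 2*A) * (1 + h0*L*A)^0 := by
          simp; linarith
        exact mul_nonneg (mul_nonneg hh.le h1) hE0
      · obtain ⟨i', rfl⟩ : ∃ i', i = i' + 1 := ⟨i - 1, (Nat.succ_pred_eq_of_pos hpos).symm⟩
        obtain ⟨Q', Uh, Vh, hUh, hVh, hsU0, hsV0, hspans, hYhat, _, htrunc⟩ :=
          hstage (i' + 1) hpos hi
        have hP1 : (1:ℝ) ≤ (1 + h0*L*A)^i' := one_le_pow₀ hbase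
        have hPnn : (0:ℝ) ≤ (1 + h0*L*A)^i' := by linarith
        have hSa : (∑ j ∈ Finset.range (i' + 1), |a (i' + 1) j|) ≤ A := hAa _ hi
        have hSann : (0:ℝ) ≤ ∑ j ∈ Finset.range (i' + 1), |a (i' + 1) j| :=
          Finset.sum_nonneg fun j _ => abs_nonneg _
        -- the Galerkin projection error
        have hGY := keyEst Q' Uh Vh hUh hVh hsU0 hsV0 (i' + 1) (a (i' + 1)) hi.le hspans
        rw [← hYhat] at hGY
        -- the Runge–Kutta comparison error
        have hZe : Zs (i' + 1) = Yk + h • ∑ j ∈ Finset.range (i' + 1),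
            a (i' + 1) j • F (tk + h * c j) (Zs j) := RKStage_eq a c F tk h Yk (i' + 1)
        have hGZi := hGZ (i' + 1) (a (i' + 1)) hi.le
        -- bound the sum in the RK comparison
        have hsum : (∑ j ∈ Finset.range (i' + 1), |a (i' + 1) j| * (L * ‖Y j - Zs j‖))
            ≤ A * (L * (h * ((1 + 2*A) * (1 + h0*L*A)^i') * (εr + γr))) := by
          have step1 : ∀ j ∈ Finset.range (i' + 1),
              |a (i' + 1) j| * (L * ‖Y j - Zs j‖) ≤
              |a (i' + 1) j| * (L * (h * ((1 + 2*A) * (1 + h0*L*A)^i') * (εr + γr))) := by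
            intro j hj
            have hji : j < i' + 1 := Finset.mem_range.mp hj
            have hjs : j < s := lt_of_lt_of_le hji hi.le
            have hb1 : ‖Y j - Zs j‖ ≤ h * ((1 + 2*A) * (1 + h0*L*A)^j) * (εr + γr) :=
              ih j hji hjs
            have hb2 : (1 + h0*L*A)^j ≤ (1 + h0*L*A)^i' :=
              pow_le_pow_right₀ hbase (Nat.lt_succ_iff.mp hji)
            have hb3 : ‖Y j - Zs j‖ ≤ h * ((1 + 2*A) * (1 + h0*L*A)^i') * (εr + γr) := by
              refine le_trans hb1 ?_
              have h4 : (1 + 2*A) * (1 + h0*L*A)^j ≤ (1 + 2*A) * (1 + h0*L*A)^i' :=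
                mul_le_mul_of_nonneg_left hb2 (by linarith)
              exact mul_le_mul_of_nonneg_right (mul_le_mul_of_nonneg_left h4 hh.le) hE0
            refine mul_le_mul_of_nonneg_left ?_ (abs_nonneg _)
            exact mul_le_mul_of_nonneg_left hb3 hL.le
          refine le_trans (Finset.sum_le_sum step1) ?_
          rw [← Finset.sum_mul]
          refine mul_le_mul_of_nonneg_right hSa ?_
          have h5 : (0:ℝ) ≤ h * ((1 + 2*A) * (1 + h0*L*A)^i') * (εr + γr) :=
            mul_nonneg (mul_nonneg hh.le (mul_nonneg (by linarith) hPnn)) hE0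
          exact mul_nonneg hL.le h5
        -- assemble
        have tri : ‖Y (i' + 1) - Zs (i' + 1)‖ ≤
            ‖Yhat (i' + 1) - Y (i' + 1)‖ +
            ‖(Yk + h • ∑ j ∈ Finset.range (i' + 1),
                a (i' + 1) j • F (tk + h * c j) (Y j)) - Yhat (i' + 1)‖ +
            ‖(Yk + h • ∑ j ∈ Finset.range (i' + 1),
                a (i' + 1) j • F (tk + h * c j) (Y j)) -
              (Yk + h • ∑ j ∈ Finset.range (i' + 1),
                a (i' + 1) j • F (tk + h * c j) (Zs j))‖ := by
          rw [hZe]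
          have := norm_sub_le_norm_sub_add_norm_sub (Y (i' + 1))
            (Yk + h • ∑ j ∈ Finset.range (i' + 1),
              a (i' + 1) j • F (tk + h * c j) (Y j))
            (Yk + h • ∑ j ∈ Finset.range (i' + 1),
              a (i' + 1) j • F (tk + h * c j) (Zs j))
          have h2 : ‖Y (i' + 1) - (Yk + h • ∑ j ∈ Finset.range (i' + 1),
              a (i' + 1) j • F (tk + h * c j) (Y j))‖ ≤
              ‖Yhat (i' + 1) - Y (i' + 1)‖ +
              ‖(Yk + h • ∑ j ∈ Finset.range (i' + 1),
                a (i' + 1) j • F (tk + h * c j) (Y j)) - Yhat (i' + 1)‖ := by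
            rw [show Y (i' + 1) - (Yk + h • ∑ j ∈ Finset.range (i' + 1),
                a (i' + 1) j • F (tk + h * c j) (Y j)) =
              -((Yhat (i' + 1) - Y (i' + 1)) +
                ((Yk + h • ∑ j ∈ Finset.range (i' + 1),
                  a (i' + 1) j • F (tk + h * c j) (Y j)) - Yhat (i' + 1))) by abel]
            rw [norm_neg]
            exact norm_add_le _ _
          linarith
        have hq : h * L * A ≤ h0 * L * A := by nlinarith
        calc ‖Y (i' + 1) - Zs (i' + 1)‖
            ≤ h * γr + 2 * (h * ((∑ j ∈ Finset.range (i' + 1), |a (i' + 1) j|) * εr)) +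
              h * (A * (L * (h * ((1 + 2*A) * (1 + h0*L*A)^i') * (εr + γr)))) := by
              have := le_trans hGZi (mul_le_mul_of_nonneg_left hsum hh.le)
              linarith [tri, htrunc, hGY]
          _ ≤ h * ((1 + 2*A) * (1 + h0*L*A)^(i' + 1)) * (εr + γr) := by
              rw [pow_succ]
              have e1 : h * γr ≤ h * (εr + γr) := by nlinarith
              have e2 : 2 * (h * ((∑ j ∈ Finset.range (i' + 1), |a (i' + 1) j|) * εr)) ≤
                  2 * A * (h * (εr + γr)) := by
                have e2a : (∑ j ∈ Finset.range (i' + 1), |a (i' + 1) j|) * εr ≤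
                    A * (εr + γr) :=
                  le_trans (mul_le_mul_of_nonneg_right hSa hεr)
                    (mul_le_mul_of_nonneg_left (by linarith) hA0')
                have e2b := mul_le_mul_of_nonneg_left e2a hh.le
                nlinarith [e2b]
              have e3 : h * (A * (L * (h * ((1 + 2*A) * (1 + h0*L*A)^i') * (εr + γr)))) ≤
                  h * ((1 + 2*A) * ((1 + h0*L*A)^i' * (h0*L*A)) * (εr + γr)) := by
                have key : h * L * A * ((1 + 2*A) * (1 + h0*L*A)^i' * (εr + γr)) ≤
                    h0 * L * A * ((1 + 2*A) * (1 + h0*L*A)^i' * (εr + γr)) := by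
                  refine mul_le_mul_of_nonneg_right hq ?_
                  refine mul_nonneg (mul_nonneg (by linarith) hPnn) hE0
                nlinarith [key]
              have expand : h * ((1 + 2*A) * ((1 + h0*L*A)^i' * (1 + h0*L*A))) * (εr + γr) =
                  h * ((1 + 2*A) * (1 + h0*L*A)^i') * (εr + γr) +
                  h * ((1 + 2*A) * ((1 + h0*L*A)^i' * (h0*L*A))) * (εr + γr) := by ring
              have e4 : h * (εr + γr) + 2 * A * (h * (εr + γr)) ≤
                  h * ((1 + 2*A) * (1 + h0*L*A)^i') * (εr + γr) := by
                have e4' : h * ((1 + 2*A) * 1) * (εr + γr) ≤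
                    h * ((1 + 2*A) * (1 + h0*L*A)^i') * (εr + γr) :=
                  mul_le_mul_of_nonneg_right (mul_le_mul_of_nonneg_left
                    (mul_le_mul_of_nonneg_left hP1 (by linarith)) hh.le) hE0
                nlinarith [e4']
              linarith [e1, e2, e3, e4, expand]
  -- the final update step
  obtain ⟨Q', Uh, Vh, Yhat1, hUh, hVh, hsU0, hsV0, hspans, hYhat1, _, _, htr⟩ := hfin
  have hSb : (∑ i ∈ Finset.range s, |b i|) ≤ A := hAb
  have hSbnn : (0:ℝ) ≤ ∑ i ∈ Finset.range s, |b i| :=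
    Finset.sum_nonneg fun j _ => abs_nonneg _
  have hGb := keyEst Q' Uh Vh hUh hVh hsU0 hsV0 s b le_rfl hspans
  rw [← hYhat1] at hGb
  have hGZb := hGZ s b le_rfl
  have hPs1 : (1:ℝ) ≤ (1 + h0*L*A)^s := one_le_pow₀ hbase
  have hPsnn : (0:ℝ) ≤ (1 + h0*L*A)^s := by linarith
  have hsumb : (∑ j ∈ Finset.range s, |b j| * (L * ‖Y j - Zs j‖))
      ≤ A * (L * (h * ((1 + 2*A) * (1 + h0*L*A)^s) * (εr + γr))) := by
    have step1 : ∀ j ∈ Finset.range s,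
        |b j| * (L * ‖Y j - Zs j‖) ≤
        |b j| * (L * (h * ((1 + 2*A) * (1 + h0*L*A)^s) * (εr + γr))) := by
      intro j hj
      have hjs : j < s := Finset.mem_range.mp hj
      have hb1 := stageB j hjs
      have hb2 : (1 + h0*L*A)^j ≤ (1 + h0*L*A)^s := pow_le_pow_right₀ hbase hjs.le
      have hb3 : ‖Y j - Zs j‖ ≤ h * ((1 + 2*A) * (1 + h0*L*A)^s) * (εr + γr) := by
        refine le_trans hb1 ?_
        have h4 : (1 + 2*A) * (1 + h0*L*A)^j ≤ (1 + 2*A) * (1 + h0*L*A)^s :=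
          mul_le_mul_of_nonneg_left hb2 (by linarith)
        exact mul_le_mul_of_nonneg_right (mul_le_mul_of_nonneg_left h4 hh.le) hE0
      refine mul_le_mul_of_nonneg_left ?_ (abs_nonneg _)
      exact mul_le_mul_of_nonneg_left hb3 hL.le
    refine le_trans (Finset.sum_le_sum step1) ?_
    rw [← Finset.sum_mul]
    refine mul_le_mul_of_nonneg_right hSb ?_
    have h5 : (0:ℝ) ≤ h * ((1 + 2*A) * (1 + h0*L*A)^s) * (εr + γr) :=
      mul_nonneg (mul_nonneg hh.le (mul_nonneg (by linarith) hPsnn)) hE0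
    exact mul_nonneg hL.le h5
  -- triangle inequality chain
  have tri : ‖Yk1 - W‖ ≤ ‖Yhat1 - Yk1‖ +
      ‖(Yk + h • ∑ i ∈ Finset.range s, b i • F (tk + h * c i) (Y i)) - Yhat1‖ +
      ‖(Yk + h • ∑ i ∈ Finset.range s, b i • F (tk + h * c i) (Y i)) -
        (Yk + h • ∑ i ∈ Finset.range s, b i • F (tk + h * c i) (Zs i))‖ +
      ‖(Yk + h • ∑ i ∈ Finset.range s, b i • F (tk + h * c i) (Zs i)) - W‖ := by
    have expand : Yk1 - W = -(Yhat1 - Yk1) - ((Yk + h • ∑ i ∈ Finset.range s,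
        b i • F (tk + h * c i) (Y i)) - Yhat1) +
        ((Yk + h • ∑ i ∈ Finset.range s, b i • F (tk + h * c i) (Y i)) -
          (Yk + h • ∑ i ∈ Finset.range s, b i • F (tk + h * c i) (Zs i))) +
        ((Yk + h • ∑ i ∈ Finset.range s, b i • F (tk + h * c i) (Zs i)) - W) := by
      abel
    rw [expand]
    refine le_trans (norm_add_le _ _) ?_
    refine add_le_add ?_ le_rfl
    refine le_trans (norm_add_le _ _) ?_
    refine add_le_add ?_ le_rfl
    refine le_trans (norm_sub_le _ _) ?_
    rw [norm_neg]
  have hq : h * L * A ≤ h0 * L * A := by nlinarith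
  have t3 : ‖(Yk + h • ∑ i ∈ Finset.range s, b i • F (tk + h * c i) (Y i)) -
      (Yk + h • ∑ i ∈ Finset.range s, b i • F (tk + h * c i) (Zs i))‖ ≤
      h * (h0*L*A * ((1 + 2*A) * (1 + h0*L*A)^s)) * (εr + γr) := by
    refine le_trans hGZb ?_
    refine le_trans (mul_le_mul_of_nonneg_left hsumb hh.le) ?_
    have key : h * L * A * ((1 + 2*A) * (1 + h0*L*A)^s * (εr + γr)) ≤
        h0 * L * A * ((1 + 2*A) * (1 + h0*L*A)^s * (εr + γr)) := by
      refine mul_le_mul_of_nonneg_right hq ?_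
      refine mul_nonneg (mul_nonneg (by linarith) hPsnn) hE0
    nlinarith [key]
  -- final arithmetic
  have hp0 : (0:ℝ) ≤ h^p := pow_nonneg hh.le p
  have hE' : (0:ℝ) ≤ εr + γr + h^p := by linarith
  have b1 : ‖Yhat1 - Yk1‖ ≤ h * 1 * (εr + γr + h^p) := by
    refine le_trans htr ?_
    have := mul_le_mul_of_nonneg_left (show γr ≤ εr + γr + h^p by linarith) hh.le
    nlinarith [this]
  have b2 : ‖(Yk + h • ∑ i ∈ Finset.range s, b i • F (tk + h * c i) (Y i)) - Yhat1‖ ≤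
      h * (2*A) * (εr + γr + h^p) := by
    refine le_trans hGb ?_
    have h6a : (∑ j ∈ Finset.range s, |b j|) * εr ≤ A * εr :=
      mul_le_mul_of_nonneg_right hSb hεr
    have h6b : A * εr ≤ A * (εr + γr + h^p) :=
      mul_le_mul_of_nonneg_left (by linarith) hA0'
    have h6c := mul_le_mul_of_nonneg_left (le_trans h6a h6b) hh.le
    nlinarith [h6c]
  have b3 : ‖(Yk + h • ∑ i ∈ Finset.range s, b i • F (tk + h * c i) (Y i)) -
      (Yk + h • ∑ i ∈ Finset.range s, b i • F (tk + h * c i) (Zs i))‖ ≤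
      h * (h0*L*A * ((1 + 2*A) * (1 + h0*L*A)^s)) * (εr + γr + h^p) := by
    have hKnn : (0:ℝ) ≤ h0*L*A * ((1 + 2*A) * (1 + h0*L*A)^s) :=
      mul_nonneg hq0 (mul_nonneg (by linarith) hPsnn)
    refine le_trans t3 ?_
    exact mul_le_mul_of_nonneg_left (by linarith) (mul_nonneg hh.le hKnn)
  have b4 : ‖(Yk + h • ∑ i ∈ Finset.range s, b i • F (tk + h * c i) (Zs i)) - W‖ ≤
      h * CL * (εr + γr + h^p) := by
    refine le_trans hRK ?_
    rw [pow_succ]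
    have h7a : CL * h^p ≤ CL * (εr + γr + h^p) :=
      mul_le_mul_of_nonneg_left (by linarith) hCL
    have h7b := mul_le_mul_of_nonneg_left h7a hh.le
    nlinarith [h7b]
  linarith [tri, b1, b2, b3, b4]

end RKBUGAux
set_option maxHeartbeats 1000000 in
theorem rkbug_global_error
    -- the explicit s-stage Runge–Kutta method of order p with nodes in [0,1],
    -- and the constants of Assumptions 1 and 2
    (s p : ℕ) (hs : 1 ≤ s) (a : ℕ → ℕ → ℝ) (b c : ℕ → ℝ) (L h0 T CL : ℝ)
    (hL : 0 < L) (hh0 : 0 < h0) (hCL : 0 < CL) (hT : 0 ≤ T)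
    (hc : ∀ i < s, 0 ≤ c i ∧ c i ≤ 1) :
    -- there is a constant C_glob > 0 independent of r and h such that
    ∃ Cglob : ℝ, 0 < Cglob ∧
      ∀ (n m r : ℕ)
        (F : ℝ → Matrix (Fin n) (Fin m) ℝ → Matrix (Fin n) (Fin m) ℝ) (B : ℝ),
        -- Assumption 1
        (∀ t, 0 ≤ t → t ≤ T → ∀ X Z : Matrix (Fin n) (Fin m) ℝ,
          ‖F t X - F t Z‖ ≤ L * ‖X - Z‖) →
        (∀ t, 0 ≤ t → t ≤ T → ∀ X : Matrix (Fin n) (Fin m) ℝ, ‖F t X‖ ≤ B) →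
        -- the exact flow Φ of Ẏ = F(t,Y): `Phi t0 t X` is the solution value
        -- at time t of the initial value problem with value X at time t0
        ∀ Phi : ℝ → ℝ → Matrix (Fin n) (Fin m) ℝ → Matrix (Fin n) (Fin m) ℝ,
        (∀ t0 X, Phi t0 t0 X = X) →
        (∀ (t0 : ℝ) (X : Matrix (Fin n) (Fin m) ℝ), ∀ t, 0 ≤ t → t ≤ T →
          HasDerivAt (fun τ => Phi t0 τ X) (F t (Phi t0 t X)) t) →
        -- Assumption 2: order-p local accuracy of the classical Runge–Kutta
        -- step, for every initial value Z0
        (∀ tk h : ℝ, 0 < h → h ≤ h0 → 0 ≤ tk → tk + h ≤ T →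
          ∀ (Z0 : Matrix (Fin n) (Fin m) ℝ)
            (Z : ℕ → Matrix (Fin n) (Fin m) ℝ), Z 0 = Z0 →
            (∀ i, 1 ≤ i → i < s → Z i = Z0 + h • ∑ j ∈ Finset.range i,
              a i j • F (tk + h * c j) (Z j)) →
            ‖Z0 + h • ∑ i ∈ Finset.range s, b i • F (tk + h * c i) (Z i) -
                Phi tk (tk + h) Z0‖ ≤ CL * h ^ (p + 1)) →
        ∀ εr γr : ℝ, 0 ≤ εr → 0 ≤ γr →
        -- ε_r bounds the tangent-space projection error on M_r
        (∀ t, 0 ≤ t → t ≤ T →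
          ∀ (U : Matrix (Fin n) (Fin r) ℝ) (S : Matrix (Fin r) (Fin r) ℝ)
            (V : Matrix (Fin m) (Fin r) ℝ), Uᵀ * U = 1 → Vᵀ * V = 1 → IsUnit S →
            ‖F t (U * S * Vᵀ) - tangentProj U V (F t (U * S * Vᵀ))‖ ≤ εr) →
        ∀ h : ℝ, 0 < h → h ≤ h0 →
        -- the exact solution A(t) = Φ^t_F(A_0) and the iterates Y_k of the
        -- Runge–Kutta BUG integrator, with Y_0 ∈ M_r
        ∀ (A0 : Matrix (Fin n) (Fin m) ℝ) (Y : ℕ → Matrix (Fin n) (Fin m) ℝ),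
          (∃ (U0 : Matrix (Fin n) (Fin r) ℝ) (S0 : Matrix (Fin r) (Fin r) ℝ)
            (V0 : Matrix (Fin m) (Fin r) ℝ), U0ᵀ * U0 = 1 ∧ V0ᵀ * V0 = 1 ∧
            IsUnit S0 ∧ Y 0 = U0 * S0 * V0ᵀ) →
          (∀ k : ℕ, ((k : ℝ) + 1) * h ≤ T →
            RKBUGStep s a b c r F ((k : ℝ) * h) h γr (Y k) (Y (k + 1))) →
          -- conclusion: global error bound, with δ_r = ‖Y_0 − A_0‖
          ∀ k : ℕ, (k : ℝ) * h ≤ T →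
            ‖Y k - Phi 0 ((k : ℝ) * h) A0‖ ≤
              Cglob * (‖Y 0 - A0‖ + εr + γr + h ^ p) := by
  classical
  -- the aggregate coefficient bound A and the local-error constant C1
  set A : ℝ := 1 + (∑ i ∈ Finset.range s, ∑ j ∈ Finset.range s, |a i j|) +
      (∑ i ∈ Finset.range s, |b i|) with hAdef
  have hsa_nn : (0:ℝ) ≤ ∑ i ∈ Finset.range s, ∑ j ∈ Finset.range s, |a i j| :=
    Finset.sum_nonneg fun i _ => Finset.sum_nonneg fun j _ => abs_nonneg _
  have hsb_nn : (0:ℝ) ≤ ∑ i ∈ Finset.range s, |b i| :=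
    Finset.sum_nonneg fun i _ => abs_nonneg _
  have hA1 : (1:ℝ) ≤ A := by rw [hAdef]; linarith
  have hA0' : (0:ℝ) ≤ A := le_trans zero_le_one hA1
  have hAa : ∀ i < s, (∑ j ∈ Finset.range i, |a i j|) ≤ A := by
    intro i hi
    have h1 : (∑ j ∈ Finset.range i, |a i j|) ≤ ∑ j ∈ Finset.range s, |a i j| :=
      Finset.sum_le_sum_of_subset_of_nonneg (Finset.range_subset_range.mpr hi.le)
        (fun j _ _ => abs_nonneg _)
    have h2 : (∑ j ∈ Finset.range s, |a i j|) ≤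
        ∑ i' ∈ Finset.range s, ∑ j ∈ Finset.range s, |a i' j| :=
      Finset.single_le_sum (f := fun i' => ∑ j ∈ Finset.range s, |a i' j|)
        (fun i' _ => Finset.sum_nonneg fun j _ => abs_nonneg _) (Finset.mem_range.mpr hi)
    rw [hAdef]; linarith
  have hAb : (∑ i ∈ Finset.range s, |b i|) ≤ A := by rw [hAdef]; linarith
  set C1 : ℝ := (1 + 2*A) + h0*L*A*((1 + 2*A)*(1 + h0*L*A)^s) + CL with hC1def
  have hq0 : (0:ℝ) ≤ h0 * L * A := by positivity
  have hbase : (1:ℝ) ≤ 1 + h0 * L * A := by linarith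
  have hPs : (0:ℝ) ≤ (1 + h0*L*A)^s := pow_nonneg (by linarith) s
  have hC1pos : 0 < C1 := by
    have : (0:ℝ) ≤ h0*L*A*((1 + 2*A)*(1 + h0*L*A)^s) :=
      mul_nonneg hq0 (mul_nonneg (by linarith) hPs)
    rw [hC1def]; linarith
  refine ⟨Real.exp (L*T) * (1 + C1 * T), ?_, ?_⟩
  · have : (0:ℝ) < 1 + C1 * T := by nlinarith
    exact mul_pos (Real.exp_pos _) this
  intro n m r F B hLip hB Phi hPhi0 hPhiD hRKall εr γr hεr hγr heps h hhpos hhle A0 Y hY0mem hsteps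
  -- the key induction
  have hδ0 : (0:ℝ) ≤ ‖Y 0 - A0‖ := norm_nonneg _
  have hp0 : (0:ℝ) ≤ h ^ p := pow_nonneg hhpos.le p
  have hE'0 : (0:ℝ) ≤ εr + γr + h^p := by linarith
  have hX0 : (0:ℝ) ≤ C1 * (εr + γr + h^p) := mul_nonneg hC1pos.le hE'0
  have key : ∀ k : ℕ, (k:ℝ)*h ≤ T →
      ‖Y k - Phi 0 ((k:ℝ)*h) A0‖ ≤
        Real.exp (L*((k:ℝ)*h)) * (‖Y 0 - A0‖ + ((k:ℝ)*h)*(C1*(εr + γr + h^p))) := by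
    intro k
    induction k with
    | zero =>
      intro _
      simp [hPhi0]
    | succ k ih =>
      intro hk1T
      have hcast : ((k+1:ℕ):ℝ)*h = (k:ℝ)*h + h := by push_cast; ring
      rw [hcast] at hk1T ⊢
      have hkh0 : (0:ℝ) ≤ (k:ℝ)*h := mul_nonneg (Nat.cast_nonneg k) hhpos.le
      have hkT : (k:ℝ)*h ≤ T := by linarith
      have htT' : (k:ℝ)*h + h ≤ T := hk1T
      have hstep := hsteps k (by push_cast; linarith)
      -- local error against the exact flow restarted at t_k
      have hRKinst := hRKall ((k:ℝ)*h) h hhpos hhle hkh0 htT' (Y k)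
        (RKStage a c F ((k:ℝ)*h) h (Y k))
        (RKBUGAux.RKStage_zero a c F ((k:ℝ)*h) h (Y k))
        (fun i _ _ => RKBUGAux.RKStage_eq a c F ((k:ℝ)*h) h (Y k) i)
      have hloc := RKBUGAux.local_error hs a b c L h0 T CL A εr γr ((k:ℝ)*h) h
        hL hh0 hCL.le hA1 hAa hAb hc hεr hγr F hLip heps hkh0 hhpos hhle htT'
        (Y k) (Y (k+1)) (Phi ((k:ℝ)*h) ((k:ℝ)*h + h) (Y k)) hstep hRKinst
      rw [← hC1def] at hloc
      -- Gronwall stability of the exact flow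
      set v : ℝ → Matrix (Fin n) (Fin m) ℝ → Matrix (Fin n) (Fin m) ℝ :=
        fun t X => F (min (max t 0) T) X with hvdef
      have hv : ∀ t, LipschitzWith (Real.toNNReal L) (v t) := by
        intro t
        apply LipschitzWith.of_dist_le_mul
        intro X Z
        have h1 : 0 ≤ min (max t 0) T := le_min (le_max_right t 0) hT
        have h2 : min (max t 0) T ≤ T := min_le_right _ _
        rw [Real.coe_toNNReal L hL.le]
        simpa [hvdef, dist_eq_norm] using hLip _ h1 h2 X Z
      have hcont1 : ContinuousOn (fun τ => Phi ((k:ℝ)*h) τ (Y k))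
          (Set.Icc ((k:ℝ)*h) ((k:ℝ)*h + h)) := by
        intro τ hτ
        exact ((hPhiD ((k:ℝ)*h) (Y k) τ (le_trans hkh0 hτ.1)
          (le_trans hτ.2 htT')).continuousAt).continuousWithinAt
      have hderiv1 : ∀ τ ∈ Set.Ico ((k:ℝ)*h) ((k:ℝ)*h + h),
          HasDerivWithinAt (fun τ => Phi ((k:ℝ)*h) τ (Y k))
            (v τ (Phi ((k:ℝ)*h) τ (Y k))) (Set.Ici τ) τ := by
        intro τ hτ
        have h0τ : 0 ≤ τ := le_trans hkh0 hτ.1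
        have hτT : τ ≤ T := le_trans hτ.2.le htT'
        have hclamp : min (max τ 0) T = τ := by rw [max_eq_left h0τ, min_eq_left hτT]
        have hder := (hPhiD ((k:ℝ)*h) (Y k) τ h0τ hτT).hasDerivWithinAt (s := Set.Ici τ)
        simp only [hvdef, hclamp]; exact hder
      have hcont2 : ContinuousOn (fun τ => Phi 0 τ A0)
          (Set.Icc ((k:ℝ)*h) ((k:ℝ)*h + h)) := by
        intro τ hτ
        exact ((hPhiD 0 A0 τ (le_trans hkh0 hτ.1)
          (le_trans hτ.2 htT')).continuousAt).continuousWithinAt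
      have hderiv2 : ∀ τ ∈ Set.Ico ((k:ℝ)*h) ((k:ℝ)*h + h),
          HasDerivWithinAt (fun τ => Phi 0 τ A0)
            (v τ (Phi 0 τ A0)) (Set.Ici τ) τ := by
        intro τ hτ
        have h0τ : 0 ≤ τ := le_trans hkh0 hτ.1
        have hτT : τ ≤ T := le_trans hτ.2.le htT'
        have hclamp : min (max τ 0) T = τ := by rw [max_eq_left h0τ, min_eq_left hτT]
        have hder := (hPhiD 0 A0 τ h0τ hτT).hasDerivWithinAt (s := Set.Ici τ)
        simp only [hvdef, hclamp]; exact hder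
      have ha' : dist (Phi ((k:ℝ)*h) ((k:ℝ)*h) (Y k)) (Phi 0 ((k:ℝ)*h) A0) ≤
          dist (Y k) (Phi 0 ((k:ℝ)*h) A0) := by rw [hPhi0]
      have hgron := dist_le_of_trajectories_ODE hv hcont1 hderiv1 hcont2 hderiv2 ha'
        ((k:ℝ)*h + h) ⟨by linarith, le_rfl⟩
      rw [Real.coe_toNNReal L hL.le] at hgron
      have hgron' : dist (Phi ((k:ℝ)*h) ((k:ℝ)*h + h) (Y k)) (Phi 0 ((k:ℝ)*h + h) A0) ≤
          dist (Y k) (Phi 0 ((k:ℝ)*h) A0) * Real.exp (L * h) := by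
        have : (k:ℝ)*h + h - (k:ℝ)*h = h := by ring
        rwa [this] at hgron
      -- combine
      have tri : ‖Y (k+1) - Phi 0 ((k:ℝ)*h + h) A0‖ ≤
          ‖Y (k+1) - Phi ((k:ℝ)*h) ((k:ℝ)*h + h) (Y k)‖ +
          ‖Phi ((k:ℝ)*h) ((k:ℝ)*h + h) (Y k) - Phi 0 ((k:ℝ)*h + h) A0‖ :=
        norm_sub_le_norm_sub_add_norm_sub _ _ _
      have ihk := ih hkT
      simp only [dist_eq_norm] at hgron'
      have hmul : ‖Y k - Phi 0 ((k:ℝ)*h) A0‖ * Real.exp (L * h) ≤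
          (Real.exp (L*((k:ℝ)*h)) * (‖Y 0 - A0‖ + ((k:ℝ)*h)*(C1*(εr + γr + h^p)))) *
            Real.exp (L * h) :=
        mul_le_mul_of_nonneg_right ihk (Real.exp_pos _).le
      have hexpeq : Real.exp (L*((k:ℝ)*h)) * Real.exp (L * h) =
          Real.exp (L*((k:ℝ)*h + h)) := by
        rw [← Real.exp_add]; ring_nf
      have hone : (1:ℝ) ≤ Real.exp (L*((k:ℝ)*h + h)) := by
        refine Real.one_le_exp ?_
        have : (0:ℝ) ≤ (k:ℝ)*h + h := by linarith
        positivity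
      have hrearr : (Real.exp (L*((k:ℝ)*h)) * (‖Y 0 - A0‖ + ((k:ℝ)*h)*(C1*(εr + γr + h^p))))
          * Real.exp (L * h) = Real.exp (L*((k:ℝ)*h + h)) *
            (‖Y 0 - A0‖ + ((k:ℝ)*h)*(C1*(εr + γr + h^p))) := by
        rw [← hexpeq]; ring
      have hfinal1 : h * C1 * (εr + γr + h^p) ≤
          Real.exp (L*((k:ℝ)*h + h)) * (h * (C1 * (εr + γr + h^p))) := by
        have hhX : (0:ℝ) ≤ h * (C1 * (εr + γr + h^p)) := mul_nonneg hhpos.le hX0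
        calc h * C1 * (εr + γr + h^p) = 1 * (h * (C1 * (εr + γr + h^p))) := by ring
          _ ≤ Real.exp (L*((k:ℝ)*h + h)) * (h * (C1 * (εr + γr + h^p))) :=
            mul_le_mul_of_nonneg_right hone hhX
      have expand : Real.exp (L*((k:ℝ)*h + h)) *
            (‖Y 0 - A0‖ + ((k:ℝ)*h + h)*(C1*(εr + γr + h^p))) =
          Real.exp (L*((k:ℝ)*h + h)) *
            (‖Y 0 - A0‖ + ((k:ℝ)*h)*(C1*(εr + γr + h^p))) +
          Real.exp (L*((k:ℝ)*h + h)) * (h * (C1 * (εr + γr + h^p))) := by ring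
      have hmul2 : ‖Y k - Phi 0 ((k:ℝ)*h) A0‖ * Real.exp (L * h) ≤
          Real.exp (L*((k:ℝ)*h + h)) *
            (‖Y 0 - A0‖ + ((k:ℝ)*h)*(C1*(εr + γr + h^p))) := by
        rw [← hrearr]; exact hmul
      linarith [tri, hloc, hgron', hmul2, hfinal1, expand]
  -- conclusion
  intro k hkT
  have hkh0 : (0:ℝ) ≤ (k:ℝ)*h := mul_nonneg (Nat.cast_nonneg k) hhpos.le
  have k1 := key k hkT
  have s1 : Real.exp (L*((k:ℝ)*h)) ≤ Real.exp (L*T) :=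
    Real.exp_le_exp.mpr (mul_le_mul_of_nonneg_left hkT hL.le)
  have s2 : ‖Y 0 - A0‖ + ((k:ℝ)*h)*(C1*(εr + γr + h^p)) ≤
      ‖Y 0 - A0‖ + T*(C1*(εr + γr + h^p)) := by
    have := mul_le_mul_of_nonneg_right hkT hX0
    linarith
  have hnn : (0:ℝ) ≤ ‖Y 0 - A0‖ + ((k:ℝ)*h)*(C1*(εr + γr + h^p)) :=
    add_nonneg hδ0 (mul_nonneg hkh0 hX0)
  have s3 : Real.exp (L*((k:ℝ)*h)) * (‖Y 0 - A0‖ + ((k:ℝ)*h)*(C1*(εr + γr + h^p))) ≤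
      Real.exp (L*T) * (‖Y 0 - A0‖ + T*(C1*(εr + γr + h^p))) :=
    mul_le_mul s1 s2 hnn (Real.exp_pos _).le
  have inner : ‖Y 0 - A0‖ + T*(C1*(εr + γr + h^p)) ≤
      (1 + C1*T) * (‖Y 0 - A0‖ + (εr + γr + h^p)) := by
    have f1 : (0:ℝ) ≤ C1*T*‖Y 0 - A0‖ := mul_nonneg (mul_nonneg hC1pos.le hT) hδ0
    nlinarith [f1, hE'0]
  have s4 : Real.exp (L*T) * (‖Y 0 - A0‖ + T*(C1*(εr + γr + h^p))) ≤
      (Real.exp (L*T) * (1 + C1*T)) * (‖Y 0 - A0‖ + (εr + γr + h^p)) := by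
    have := mul_le_mul_of_nonneg_left inner (Real.exp_pos (L*T)).le
    nlinarith [this]
  linarith [k1, s3, s4]
end
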